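/- arXiv:1903.03460 — 7 statements merged into one kernel-verified Lean document; each statement's English description precedes it below -/
import Mathlib

section
/- Let S⁶ = {(r,z₁,z₂,z₃) ∈ ℝ × ℂ³ : r² + |z₁|² + |z₂|² + |z₃|² = 1}. Define an equivalence relation on S⁶ by (r,z₁,z₂,z₃) ~ (r',z₁',z₂',z₃') iff r = r' and there exist complex numbers t₁,t₂,t₃ with |t₁| = |t₂| = |t₃| = 1 and t₁t₂t₃ = 1 such that (z₁',z₂',z₃') = (t₁z₁, t₂z₂, t₃z₃). Then the quotient space S⁶/~ is homeomorphic to S⁴. (This is the orbit space of the complexity-one action on S⁶ of the subtorus T² = {(t₁,t₂,t₃) ∈ T³ : t₁t₂t₃ = 1}, which coincides with the action of a maximal torus of G₂ on G₂/SU(3).) -/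
/-!
The map `(u, v) ↦ (‖u‖² - ‖v‖², 2uv)` identifies `ℂ²` modulo `(u, v) ~ (tu, t⁻¹v)`, `‖t‖ = 1`,
with `ℝ × ℂ`. Applied to `(z₁, z₂)` it quotients `ℂ³` by the circle `(t, t⁻¹, 1)`; the residual
circle acts on `(2z₁z₂, z₃)` with weights `(1, -1)`, so applying it once more, after the radial
map `w ↦ w / √‖w‖` that halves the degree of `2z₁z₂`, identifies `ℂ³/T²` with `ℝ⁴` compatibly
with positive scalings. Adjoining `r` and normalizing gives a continuous surjection `S⁶ → S⁴`
whose fibres are the orbits, and `S⁶` is compact.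
-/

/-- The unit sphere `S⁶ ⊂ ℝ × ℂ³`. -/
abbrev S6 : Type :=
  {p : ℝ × ℂ × ℂ × ℂ //
    p.1 ^ 2 + ‖p.2.1‖ ^ 2 + ‖p.2.2.1‖ ^ 2 + ‖p.2.2.2‖ ^ 2 = 1}

/-- `(r,z₁,z₂,z₃) ~ (r, t₁z₁, t₂z₂, t₃z₃)` for unit complex numbers with `t₁t₂t₃ = 1`. -/
def rel1 (x y : S6) : Prop :=
  y.1.1 = x.1.1 ∧
  ∃ t₁ t₂ t₃ : ℂ, ‖t₁‖ = 1 ∧ ‖t₂‖ = 1 ∧ ‖t₃‖ = 1 ∧ t₁ * t₂ * t₃ = 1 ∧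
    y.1.2.1 = t₁ * x.1.2.1 ∧ y.1.2.2.1 = t₂ * x.1.2.2.1 ∧ y.1.2.2.2 = t₃ * x.1.2.2.2

theorem nonempty_quot_homeomorph_of_continuous_surjective {X Y : Type*} [TopologicalSpace X]
    [CompactSpace X] [TopologicalSpace Y] [T2Space Y] {R : X → X → Prop} {f : X → Y}
    (hf : Continuous f) (hsurj : Function.Surjective f) (hR : ∀ x y, R x y ↔ f x = f y) :
    Nonempty (Quot R ≃ₜ Y) := by
  let g : Quot R → Y := Quot.lift f fun x y h => (hR x y).1 h
  have hg : Function.Bijective g := by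
    refine ⟨fun a b => Quot.induction_on₂ a b fun x y h => Quot.sound ((hR x y).2 h), ?_⟩
    exact fun y => (hsurj y).elim fun x hx => ⟨Quot.mk R x, hx⟩
  have hcont : Continuous (Equiv.ofBijective g hg) := continuous_quot_lift _ hf
  exact ⟨hcont.homeoOfEquivCompactToT2⟩

section Normalization

variable {M V : Type*} [AddCommGroup M] [Module ℝ M] [NormedAddCommGroup V] [NormedSpace ℝ V]
  {G : M → V} {Q : M → ℝ}

lemma ne_zero_of_homogeneous (hG : ∀ c : ℝ, 0 ≤ c → ∀ p, G (c • p) = c • G p)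
    (hQ : ∀ (c : ℝ) p, Q (c • p) = c ^ 2 * Q p) (hGQ : ∀ p q, G p = G q → Q p = Q q)
    {x : M} (hx : Q x = 1) : G x ≠ 0 := by
  intro h
  have hG0 : G 0 = 0 := by simpa using hG 0 le_rfl 0
  have hQ0 : Q 0 = 0 := by simpa using hQ 0 0
  simpa [hx, hQ0] using hGQ x 0 (h.trans hG0.symm)

lemma inv_norm_smul_eq_iff_of_homogeneous (hG : ∀ c : ℝ, 0 ≤ c → ∀ p, G (c • p) = c • G p)
    (hQ : ∀ (c : ℝ) p, Q (c • p) = c ^ 2 * Q p) (hGQ : ∀ p q, G p = G q → Q p = Q q)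
    {x y : M} (hx : Q x = 1) (hy : Q y = 1) :
    ‖G x‖⁻¹ • G x = ‖G y‖⁻¹ • G y ↔ G x = G y := by
  refine ⟨fun h => ?_, fun h => by rw [h]⟩
  have hx0 := ne_zero_of_homogeneous hG hQ hGQ hx
  have hy0 := ne_zero_of_homogeneous hG hQ hGQ hy
  obtain ⟨c, hc, hcxy⟩ :=
    ((sameRay_iff_inv_norm_smul_eq_of_ne hx0 hy0).2 h).exists_pos_left hx0 hy0
  rw [← hG c hc.le] at hcxy
  have hc1 : c = 1 := by
    have hQc := hGQ _ _ hcxy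
    rw [hQ, hx, hy, mul_one] at hQc
    nlinarith
  rwa [hc1, one_smul] at hcxy

lemma exists_inv_norm_smul_eq_of_homogeneous (hG : ∀ c : ℝ, 0 ≤ c → ∀ p, G (c • p) = c • G p)
    (hQ : ∀ (c : ℝ) p, Q (c • p) = c ^ 2 * Q p) (hQpos : ∀ p, p ≠ 0 → 0 < Q p)
    (hGsurj : Function.Surjective G) {v : V} (hv : ‖v‖ = 1) :
    ∃ x, Q x = 1 ∧ ‖G x‖⁻¹ • G x = v := by
  obtain ⟨p, rfl⟩ := hGsurj v
  have hp : 0 < Q p :=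
    hQpos p fun h => by simp [h, show G 0 = 0 by simpa using hG 0 le_rfl 0] at hv
  have hs : 0 < (√(Q p))⁻¹ := by positivity
  refine ⟨(√(Q p))⁻¹ • p, ?_, ?_⟩
  · rw [hQ, inv_pow, Real.sq_sqrt hp.le, inv_mul_cancel₀ hp.ne']
  · rw [hG _ hs.le, norm_smul, Real.norm_of_nonneg hs.le, hv, mul_one, smul_smul,
      inv_mul_cancel₀ hs.ne', one_smul]

theorem nonempty_quot_homeomorph_sphere_of_homogeneous [TopologicalSpace M]
    {R : {p // Q p = 1} → {p // Q p = 1} → Prop}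
    (hcompact : IsCompact {p | Q p = 1}) (hGcont : Continuous G) (hGsurj : Function.Surjective G)
    (hG : ∀ c : ℝ, 0 ≤ c → ∀ p, G (c • p) = c • G p) (hQ : ∀ (c : ℝ) p, Q (c • p) = c ^ 2 * Q p)
    (hQpos : ∀ p, p ≠ 0 → 0 < Q p) (hGQ : ∀ p q, G p = G q → Q p = Q q)
    (hR : ∀ x y, R x y ↔ G x = G y) :
    Nonempty (Quot R ≃ₜ Metric.sphere (0 : V) 1) := by
  have : CompactSpace {p // Q p = 1} := isCompact_iff_compactSpace.1 hcompact
  have hne : ∀ x : {p // Q p = 1}, G x ≠ 0 := fun x => ne_zero_of_homogeneous hG hQ hGQ x.2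
  let f : {p // Q p = 1} → Metric.sphere (0 : V) 1 := fun x =>
    ⟨‖G x‖⁻¹ • G x, mem_sphere_zero_iff_norm.2 (norm_smul_inv_norm (hne x))⟩
  refine nonempty_quot_homeomorph_of_continuous_surjective (f := f) ?_ ?_ fun x y => ?_
  · have hGx : Continuous fun x : {p // Q p = 1} => G x := hGcont.comp continuous_subtype_val
    exact ((hGx.norm.inv₀ fun x => norm_ne_zero_iff.2 (hne x)).smul hGx).subtype_mk _
  · rintro ⟨v, hv⟩
    obtain ⟨x, hx, hxv⟩ :=
      exists_inv_norm_smul_eq_of_homogeneous hG hQ hQpos hGsurj (mem_sphere_zero_iff_norm.1 hv)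
    exact ⟨⟨x, hx⟩, Subtype.ext hxv⟩
  · rw [hR, Subtype.ext_iff, inv_norm_smul_eq_iff_of_homogeneous hG hQ hGQ x.2 y.2]

end Normalization

noncomputable section

def radialSqrt {V : Type*} [NormedAddCommGroup V] [NormedSpace ℝ V] (v : V) : V :=
  (√‖v‖)⁻¹ • v

section RadialSqrt

variable {V : Type*} [NormedAddCommGroup V] [NormedSpace ℝ V]

@[simp]
lemma radialSqrt_zero : radialSqrt (0 : V) = 0 := by simp [radialSqrt]

lemma norm_radialSqrt (v : V) : ‖radialSqrt v‖ = √‖v‖ := by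
  rw [radialSqrt, norm_smul, norm_inv, Real.norm_of_nonneg (Real.sqrt_nonneg _), inv_mul_eq_div,
    Real.div_sqrt]

lemma radialSqrt_smul {c : ℝ} (hc : 0 ≤ c) (v : V) : radialSqrt (c • v) = √c • radialSqrt v := by
  rw [radialSqrt, radialSqrt, norm_smul, Real.norm_of_nonneg hc, Real.sqrt_mul hc, smul_smul,
    smul_smul, mul_comm, ← div_eq_mul_inv, div_mul_eq_div_div, Real.div_sqrt, div_eq_mul_inv]

lemma radialSqrt_smul_of_norm_eq_one {𝕜 : Type*} [NormedField 𝕜] [NormedSpace 𝕜 V]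
    [SMulCommClass ℝ 𝕜 V] {a : 𝕜} (ha : ‖a‖ = 1) (v : V) :
    radialSqrt (a • v) = a • radialSqrt v := by
  rw [radialSqrt, radialSqrt, norm_smul, ha, one_mul, smul_comm]

lemma norm_smul_radialSqrt (v : V) : ‖radialSqrt v‖ • radialSqrt v = v := by
  rcases eq_or_ne v 0 with rfl | hv
  · simp
  have : √‖v‖ ≠ 0 := by positivity
  rw [norm_radialSqrt, radialSqrt, smul_smul, mul_inv_cancel₀ this, one_smul]

lemma radialSqrt_norm_smul (v : V) : radialSqrt (‖v‖ • v) = v := by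
  rw [radialSqrt_smul (norm_nonneg v), ← norm_radialSqrt, norm_smul_radialSqrt]

lemma radialSqrt_injective : Function.Injective (radialSqrt : V → V) :=
  Function.LeftInverse.injective (g := fun v => ‖v‖ • v) norm_smul_radialSqrt

lemma radialSqrt_surjective : Function.Surjective (radialSqrt : V → V) :=
  Function.RightInverse.surjective (g := fun v => ‖v‖ • v) radialSqrt_norm_smul

@[fun_prop]
lemma continuous_radialSqrt : Continuous (radialSqrt : V → V) := by
  refine continuous_iff_continuousAt.2 fun v => ?_
  rcases eq_or_ne v 0 with rfl | hv
  · rw [ContinuousAt, radialSqrt_zero, tendsto_zero_iff_norm_tendsto_zero]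
    simp_rw [norm_radialSqrt]
    simpa using continuous_norm.sqrt.tendsto (0 : V)
  · exact ((continuous_norm.sqrt.continuousAt).inv₀ (by positivity)).smul continuousAt_id

end RadialSqrt

def hopf (u v : ℂ) : ℝ × ℂ := (‖u‖ ^ 2 - ‖v‖ ^ 2, 2 * u * v)

section Hopf

@[fun_prop]
lemma Continuous.hopf {X : Type*} [TopologicalSpace X] {f g : X → ℂ} (hf : Continuous f)
    (hg : Continuous g) : Continuous fun x => hopf (f x) (g x) := by
  unfold _root_.hopf; fun_prop

lemma hopf_smul (c : ℝ) (u v : ℂ) : hopf (c • u) (c • v) = c ^ 2 • hopf u v := by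
  ext <;> simp [hopf, mul_pow, Complex.real_smul] <;> ring

lemma hopf_mul_mul {t₁ t₂ : ℂ} (h₁ : ‖t₁‖ = 1) (h₂ : ‖t₂‖ = 1) (u v : ℂ) :
    hopf (t₁ * u) (t₂ * v) = ((hopf u v).1, t₁ * t₂ * (hopf u v).2) := by
  simp only [hopf, norm_mul, h₁, h₂, one_mul, Prod.mk.injEq, true_and]
  ring

lemma Complex.exists_norm_eq_one_mul_eq {u u' : ℂ} (h : ‖u'‖ = ‖u‖) :
    ∃ t : ℂ, ‖t‖ = 1 ∧ u' = t * u := by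
  rcases eq_or_ne u 0 with rfl | hu
  · exact ⟨1, norm_one, by simpa using h⟩
  · exact ⟨u' / u, by rw [norm_div, h, div_self (norm_ne_zero_iff.2 hu)],
      (div_mul_cancel₀ u' hu).symm⟩

lemma hopf_eq_hopf_iff {u v u' v' : ℂ} :
    hopf u v = hopf u' v' ↔ ∃ t : ℂ, ‖t‖ = 1 ∧ u' = t * u ∧ v' = t⁻¹ * v := by
  constructor
  · intro h
    simp only [hopf, Prod.mk.injEq, mul_assoc] at h
    obtain ⟨hdiff, hprod⟩ := h
    replace hprod := mul_left_cancel₀ two_ne_zero hprod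
    have hnorm_prod : ‖u‖ * ‖v‖ = ‖u'‖ * ‖v'‖ := by rw [← norm_mul, ← norm_mul, hprod]
    -- `(a + b)² = (a - b)² + 4ab` recovers `‖u‖² + ‖v‖²` from `hopf u v`
    have hsum : ‖u‖ ^ 2 + ‖v‖ ^ 2 = ‖u'‖ ^ 2 + ‖v'‖ ^ 2 := by
      refine (pow_left_inj₀ (by positivity) (by positivity) two_ne_zero).1 ?_
      linear_combination (‖u‖ ^ 2 - ‖v‖ ^ 2 + ‖u'‖ ^ 2 - ‖v'‖ ^ 2) * hdiff
        + 4 * (‖u‖ * ‖v‖ + ‖u'‖ * ‖v'‖) * hnorm_prod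
    obtain ⟨t, ht, rfl⟩ := Complex.exists_norm_eq_one_mul_eq
      ((pow_left_inj₀ (norm_nonneg u') (norm_nonneg u) two_ne_zero).1 (by linarith))
    obtain ⟨s, hs, rfl⟩ := Complex.exists_norm_eq_one_mul_eq
      ((pow_left_inj₀ (norm_nonneg v') (norm_nonneg v) two_ne_zero).1 (by linarith))
    rcases eq_or_ne u 0 with rfl | hu
    · exact ⟨s⁻¹, by simp [hs], by simp, by simp⟩
    rcases eq_or_ne v 0 with rfl | hv
    · exact ⟨t, ht, rfl, by simp⟩
    have hts : t * s = 1 := by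
      apply mul_right_cancel₀ (mul_ne_zero hu hv)
      linear_combination -hprod
    exact ⟨t, ht, rfl, by rw [eq_inv_of_mul_eq_one_right hts]⟩
  · rintro ⟨t, ht, rfl, rfl⟩
    have ht0 : t ≠ 0 := norm_ne_zero_iff.1 (by simp [ht])
    rw [hopf_mul_mul ht (by simp [ht]), mul_inv_cancel₀ ht0, one_mul]

lemma hopf_surjective : Function.Surjective (Function.uncurry hopf) := by
  rintro ⟨s, w⟩
  set n := √(s ^ 2 + ‖w‖ ^ 2)
  have hn : n ^ 2 = s ^ 2 + ‖w‖ ^ 2 := Real.sq_sqrt (by positivity)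
  have hsn : |s| ≤ n := Real.abs_le_sqrt (by nlinarith [sq_nonneg ‖w‖])
  have ha : 0 ≤ (n + s) / 2 := by linarith [neg_abs_le s]
  have hb : 0 ≤ (n - s) / 2 := by linarith [le_abs_self s]
  refine ⟨(√((n + s) / 2), √((n - s) / 2) * Complex.exp (w.arg * Complex.I)), ?_⟩
  have hab : 2 * (√((n + s) / 2) * √((n - s) / 2)) = ‖w‖ := by
    rw [← pow_left_inj₀ (by positivity) (norm_nonneg w) two_ne_zero, mul_pow, mul_pow,
      Real.sq_sqrt ha, Real.sq_sqrt hb]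
    linear_combination hn
  simp only [Function.uncurry_apply_pair, hopf, Prod.mk.injEq]
  constructor
  · simp only [norm_mul, Complex.norm_real, Real.norm_of_nonneg (Real.sqrt_nonneg _),
      Complex.norm_exp_ofReal_mul_I, mul_one, Real.sq_sqrt ha, Real.sq_sqrt hb]
    ring
  · conv_rhs => rw [← Complex.norm_mul_exp_arg_mul_I w, ← hab]
    push_cast
    ring

end Hopf

def SameT2Orbit (z z' : ℂ × ℂ × ℂ) : Prop :=
  ∃ t₁ t₂ t₃ : ℂ, ‖t₁‖ = 1 ∧ ‖t₂‖ = 1 ∧ ‖t₃‖ = 1 ∧ t₁ * t₂ * t₃ = 1 ∧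
    z'.1 = t₁ * z.1 ∧ z'.2.1 = t₂ * z.2.1 ∧ z'.2.2 = t₃ * z.2.2

def t2OrbitMap (z : ℂ × ℂ × ℂ) : ℝ × ℝ × ℂ :=
  ((hopf z.1 z.2.1).1, hopf (radialSqrt (hopf z.1 z.2.1).2) z.2.2)

lemma SameT2Orbit.norm_eq {z z' : ℂ × ℂ × ℂ} (h : SameT2Orbit z z') :
    ‖z'.1‖ = ‖z.1‖ ∧ ‖z'.2.1‖ = ‖z.2.1‖ ∧ ‖z'.2.2‖ = ‖z.2.2‖ := by
  obtain ⟨t₁, t₂, t₃, h₁, h₂, h₃, -, e₁, e₂, e₃⟩ := h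
  simp [e₁, e₂, e₃, h₁, h₂, h₃]

lemma t2OrbitMap_eq_iff {z z' : ℂ × ℂ × ℂ} : t2OrbitMap z = t2OrbitMap z' ↔ SameT2Orbit z z' := by
  obtain ⟨z₁, z₂, z₃⟩ := z
  obtain ⟨z₁', z₂', z₃'⟩ := z'
  simp only [t2OrbitMap, Prod.mk.injEq, SameT2Orbit]
  constructor
  · rintro ⟨hs, hm⟩
    obtain ⟨t, ht, hρ, rfl⟩ := hopf_eq_hopf_iff.1 hm
    have hw : (hopf z₁' z₂').2 = t * (hopf z₁ z₂).2 := by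
      refine radialSqrt_injective ?_
      rw [hρ]
      exact (radialSqrt_smul_of_norm_eq_one ht _).symm
    have h₁₂ : hopf (t * z₁) (1 * z₂) = hopf z₁' z₂' := by
      rw [hopf_mul_mul ht norm_one, mul_one, hs, ← hw]
    obtain ⟨t', ht', rfl, rfl⟩ := hopf_eq_hopf_iff.1 h₁₂
    have ht0 : t ≠ 0 := norm_ne_zero_iff.1 (by simp [ht])
    have ht0' : t' ≠ 0 := norm_ne_zero_iff.1 (by simp [ht'])
    exact ⟨t' * t, t'⁻¹, t⁻¹, by simp [ht, ht'], by simp [ht'], by simp [ht], by field_simp,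
      by ring, by ring, rfl⟩
  · rintro ⟨t₁, t₂, t₃, h₁, h₂, h₃, h₁₂₃, rfl, rfl, rfl⟩
    have h₁₂ : ‖t₁ * t₂‖ = 1 := by simp [h₁, h₂]
    have hρ : radialSqrt (t₁ * t₂ * (hopf z₁ z₂).2) = t₁ * t₂ * radialSqrt (hopf z₁ z₂).2 :=
      radialSqrt_smul_of_norm_eq_one h₁₂ _
    rw [hopf_mul_mul h₁ h₂, hρ, hopf_mul_mul h₁₂ h₃, h₁₂₃, one_mul]
    exact ⟨rfl, rfl⟩

lemma t2OrbitMap_smul {c : ℝ} (hc : 0 ≤ c) (z : ℂ × ℂ × ℂ) :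
    t2OrbitMap (c • z) = c ^ 2 • t2OrbitMap z := by
  simp only [t2OrbitMap, Prod.smul_fst, Prod.smul_snd, hopf_smul, Prod.smul_mk, smul_eq_mul]
  rw [radialSqrt_smul (sq_nonneg c), Real.sqrt_sq hc, hopf_smul]

lemma t2OrbitMap_surjective : Function.Surjective t2OrbitMap := by
  rintro ⟨s, y⟩
  obtain ⟨⟨ω, z₃⟩, hωz₃⟩ := hopf_surjective y
  obtain ⟨⟨z₁, z₂⟩, hz₁z₂⟩ := hopf_surjective (s, ‖ω‖ • ω)
  refine ⟨(z₁, z₂, z₃), ?_⟩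
  simp only [Function.uncurry_apply_pair] at hωz₃ hz₁z₂
  rw [t2OrbitMap]
  simp only [hz₁z₂, radialSqrt_norm_smul, hωz₃]

lemma continuous_t2OrbitMap : Continuous t2OrbitMap := by
  unfold t2OrbitMap; fun_prop

def prodEquivEuclidean : (ℝ × ℝ × ℝ × ℂ) ≃ₗ[ℝ] EuclideanSpace ℝ (Fin 5) where
  toFun x := !₂[x.1, x.2.1, x.2.2.1, x.2.2.2.re, x.2.2.2.im]
  invFun y := (y 0, y 1, y 2, ⟨y 3, y 4⟩)
  map_add' x y := by ext i; fin_cases i <;> simp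
  map_smul' c x := by ext i; fin_cases i <;> simp
  left_inv x := by simp
  right_inv y := by ext i; fin_cases i <;> simp

def sphereMap (p : ℝ × ℂ × ℂ × ℂ) : EuclideanSpace ℝ (Fin 5) :=
  prodEquivEuclidean (p.1, radialSqrt (t2OrbitMap p.2))

lemma sphereMap_smul {c : ℝ} (hc : 0 ≤ c) (p : ℝ × ℂ × ℂ × ℂ) :
    sphereMap (c • p) = c • sphereMap p := by
  rw [sphereMap, sphereMap, ← map_smul, Prod.smul_fst, Prod.smul_snd, t2OrbitMap_smul hc,
    radialSqrt_smul (sq_nonneg c), Real.sqrt_sq hc]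
  rfl

lemma sphereMap_eq_iff {p q : ℝ × ℂ × ℂ × ℂ} :
    sphereMap p = sphereMap q ↔ q.1 = p.1 ∧ SameT2Orbit p.2 q.2 := by
  rw [sphereMap, sphereMap, prodEquivEuclidean.injective.eq_iff, Prod.mk.injEq, eq_comm,
    radialSqrt_injective.eq_iff, t2OrbitMap_eq_iff]

lemma sphereMap_surjective : Function.Surjective sphereMap := by
  intro v
  obtain ⟨⟨r, y⟩, rfl⟩ := prodEquivEuclidean.surjective v
  obtain ⟨y, rfl⟩ := radialSqrt_surjective y
  obtain ⟨z, rfl⟩ := t2OrbitMap_surjective y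
  exact ⟨(r, z), rfl⟩

lemma continuous_sphereMap : Continuous sphereMap :=
  (LinearMap.continuous_of_finiteDimensional prodEquivEuclidean.toLinearMap).comp
    (continuous_fst.prodMk (continuous_radialSqrt.comp (continuous_t2OrbitMap.comp continuous_snd)))

def euclideanNormSq (p : ℝ × ℂ × ℂ × ℂ) : ℝ :=
  p.1 ^ 2 + ‖p.2.1‖ ^ 2 + ‖p.2.2.1‖ ^ 2 + ‖p.2.2.2‖ ^ 2

lemma euclideanNormSq_smul (c : ℝ) (p : ℝ × ℂ × ℂ × ℂ) :
    euclideanNormSq (c • p) = c ^ 2 * euclideanNormSq p := by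
  simp only [euclideanNormSq, Prod.smul_fst, Prod.smul_snd, norm_smul, smul_eq_mul, mul_pow,
    Real.norm_eq_abs, sq_abs]
  ring

lemma euclideanNormSq_pos {p : ℝ × ℂ × ℂ × ℂ} (hp : p ≠ 0) : 0 < euclideanNormSq p := by
  obtain ⟨r, z₁, z₂, z₃⟩ := p
  contrapose! hp
  have h : r ^ 2 + ‖z₁‖ ^ 2 + ‖z₂‖ ^ 2 + ‖z₃‖ ^ 2 ≤ 0 := hp
  simp only [Prod.mk_eq_zero, ← norm_eq_zero (a := z₁), ← norm_eq_zero (a := z₂),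
    ← norm_eq_zero (a := z₃)]
  refine ⟨?_, ?_, ?_, ?_⟩ <;> nlinarith [sq_nonneg r, sq_nonneg ‖z₁‖, sq_nonneg ‖z₂‖, sq_nonneg ‖z₃‖]

lemma euclideanNormSq_eq_of_sphereMap_eq {p q : ℝ × ℂ × ℂ × ℂ} (h : sphereMap p = sphereMap q) :
    euclideanNormSq p = euclideanNormSq q := by
  obtain ⟨hr, hz⟩ := sphereMap_eq_iff.1 h
  obtain ⟨h₁, h₂, h₃⟩ := hz.norm_eq
  simp only [euclideanNormSq, hr, h₁, h₂, h₃]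

lemma isCompact_euclideanNormSq_eq_one : IsCompact {p | euclideanNormSq p = 1} := by
  refine (isCompact_closedBall (0 : ℝ × ℂ × ℂ × ℂ) 1).of_isClosed_subset
    (isClosed_eq (by unfold euclideanNormSq; fun_prop) continuous_const) fun p hp => ?_
  obtain ⟨r, z₁, z₂, z₃⟩ := p
  have h : r ^ 2 + ‖z₁‖ ^ 2 + ‖z₂‖ ^ 2 + ‖z₃‖ ^ 2 = 1 := hp
  simp only [mem_closedBall_zero_iff, norm_prod_le_iff, Real.norm_eq_abs]
  refine ⟨?_, ?_, ?_, ?_⟩ <;> rw [← sq_le_one_iff₀ (by positivity)] <;>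
    nlinarith [sq_nonneg r, sq_nonneg ‖z₁‖, sq_nonneg ‖z₂‖, sq_nonneg ‖z₃‖, sq_abs r]

end

/-- `S⁶/T² ≅ S⁴` for the complexity-one subtorus `{t₁t₂t₃ = 1}`. -/
theorem S6_quotient_T2_homeomorphic_S4 :
    Nonempty (Quot rel1 ≃ₜ Metric.sphere (0 : EuclideanSpace ℝ (Fin 5)) 1) :=
  nonempty_quot_homeomorph_sphere_of_homogeneous isCompact_euclideanNormSq_eq_one
    continuous_sphereMap sphereMap_surjective (fun _ hc p => sphereMap_smul hc p)
    euclideanNormSq_smul (fun _ hp => euclideanNormSq_pos hp)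
    (fun _ _ => euclideanNormSq_eq_of_sphereMap_eq) fun _ _ => sphereMap_eq_iff.symm
end

section
/- Fix an integer n ≥ 1. Let Y = {A ∈ Mat_{n×n}(ℝ) : ‖A‖ = 1} be the sphere of real n×n matrices of Frobenius norm 1, and define A ~ B iff there exists Q ∈ O(n) with B = Q·A. Then the quotient space Y/~ is homeomorphic to the closed ball of dimension (n² + n − 2)/2. -/
/-!
The Gram map `A ↦ AᵀA` identifies the orbit space with the set of positive semidefinite
trace-one matrices: matrices with the same Gram matrix differ by an orthogonal factor (extend the
isometry `Ax ↦ Bx` from the range of `A`), and every such matrix is a Gram matrix. In the affine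
hyperplane of trace-one symmetric matrices, of dimension `n(n+1)/2 - 1`, this set is compact,
convex and contains a neighbourhood of `1/n`, so it is a closed ball.
-/

open Matrix Module Topology

theorem LinearMap.exists_linearIsometry_comp_eq_of_norm_eq {𝕜 E F : Type*} [RCLike 𝕜]
    [NormedAddCommGroup E] [InnerProductSpace 𝕜 E] [NormedAddCommGroup F] [InnerProductSpace 𝕜 F]
    [FiniteDimensional 𝕜 F] (f g : E →ₗ[𝕜] F) (h : ∀ x, ‖f x‖ = ‖g x‖) :
    ∃ u : F →ₗᵢ[𝕜] F, ∀ x, u (f x) = g x := by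
  have hker : ker f ≤ ker g := fun x hx => by
    rw [mem_ker, ← norm_eq_zero, ← h, norm_eq_zero, ← mem_ker]
    exact hx
  let L : range f →ₗ[𝕜] F := (ker f).liftQ g hker ∘ₗ f.quotKerEquivRange.symm.toLinearMap
  have hL : ∀ x, L ⟨f x, mem_range_self f x⟩ = g x := fun x => by simp [L]
  let L' : range f →ₗᵢ[𝕜] F := ⟨L, by rintro ⟨-, x, rfl⟩; simp only [hL]; exact (h x).symm⟩
  exact ⟨L'.extend, fun x => (L'.extend_apply ⟨f x, mem_range_self f x⟩).trans (hL x)⟩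

theorem Matrix.exists_mem_unitaryGroup_mul_eq_of_conjTranspose_mul_self_eq {𝕜 ι : Type*}
    [RCLike 𝕜] [Fintype ι] [DecidableEq ι] {A B : Matrix ι ι 𝕜} (h : Aᴴ * A = Bᴴ * B) :
    ∃ U ∈ unitaryGroup ι 𝕜, B = U * A := by
  set a := toEuclideanCLM (𝕜 := 𝕜) A
  set b := toEuclideanCLM (𝕜 := 𝕜) B
  have hab : a.adjoint ∘L a = b.adjoint ∘L b := by
    have := congrArg (toEuclideanCLM (𝕜 := 𝕜) (n := ι)) h
    rwa [← star_eq_conjTranspose, ← star_eq_conjTranspose, map_mul, map_mul, map_star,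
      map_star] at this
  obtain ⟨u, hu⟩ := LinearMap.exists_linearIsometry_comp_eq_of_norm_eq a.toLinearMap b.toLinearMap
    fun x => by simp only [ContinuousLinearMap.coe_coe,
      ContinuousLinearMap.apply_norm_eq_sqrt_inner_adjoint_left, hab]
  obtain ⟨U, hU⟩ := EquivLike.surjective (toEuclideanCLM (𝕜 := 𝕜) (n := ι)) u.toContinuousLinearMap
  refine ⟨U, mem_unitaryGroup_iff'.mpr ?_, ?_⟩ <;>
    apply EquivLike.injective (toEuclideanCLM (𝕜 := 𝕜) (n := ι))
  · rw [map_mul, map_star, hU, map_one, ContinuousLinearMap.star_eq_adjoint]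
    exact (ContinuousLinearMap.norm_map_iff_adjoint_comp_self _).mp u.norm_map
  · rw [map_mul, hU]
    ext1 x
    exact (hu x).symm

theorem Matrix.trace_transpose_mul_self {m n R : Type*} [Fintype m] [Fintype n] [CommSemiring R]
    (M : Matrix m n R) : (Mᵀ * M).trace = ∑ i, ∑ j, M i j ^ 2 := by
  simp only [trace, diag, mul_apply, transpose_apply, sq]
  exact Finset.sum_comm

theorem Matrix.IsSymm.posSemidef_smul_one_add {ι : Type*} [Fintype ι] [DecidableEq ι]
    {A : Matrix ι ι ℝ} (hA : A.IsSymm) {c : ℝ} (hc : ‖toEuclideanCLM (𝕜 := ℝ) A‖ ≤ c) :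
    (c • 1 + A).PosSemidef := by
  rw [← isPositive_toEuclideanLin_iff]
  refine ⟨isSymmetric_toEuclideanLin_iff.mpr ?_, fun x => ?_⟩
  · simpa using (isSymm_one.smul c).add hA
  have hAx : -inner ℝ (toEuclideanLin A x) x ≤ ‖toEuclideanCLM (𝕜 := ℝ) A‖ * ‖x‖ ^ 2 :=
    calc -inner ℝ (toEuclideanLin A x) x ≤ ‖toEuclideanLin A x‖ * ‖x‖ :=
          (neg_le_abs _).trans (abs_real_inner_le_norm _ _)
      _ ≤ ‖toEuclideanCLM (𝕜 := ℝ) A‖ * ‖x‖ ^ 2 := by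
          rw [sq, ← mul_assoc]
          gcongr
          exact (toEuclideanCLM (𝕜 := ℝ) A).le_opNorm x
  have hinner : inner ℝ (toEuclideanLin (c • 1 + A) x) x
      = c * ‖x‖ ^ 2 + inner ℝ (toEuclideanLin A x) x := by
    simp [inner_add_left, real_inner_smul_left]
  rw [RCLike.re_to_real, hinner]
  nlinarith [sq_nonneg ‖x‖]

namespace Matrix

variable (ι R : Type*) [Fintype ι] [CommRing R]

def symmetricSubmodule : Submodule R (Matrix ι ι R) where
  carrier := {A | A.IsSymm}
  add_mem' := IsSymm.add
  zero_mem' := isSymm_zero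
  smul_mem' c _ h := h.smul c

def symmetricEquivSym2 : symmetricSubmodule ι R ≃ₗ[R] (Sym2 ι → R) where
  toFun A := Sym2.lift ⟨fun i j => A.1 i j, fun i j => A.2.apply j i⟩
  invFun f := ⟨of fun i j => f s(i, j), IsSymm.ext fun i j => by simp [Sym2.eq_swap]⟩
  map_add' _ _ := by ext ⟨i, j⟩; rfl
  map_smul' _ _ := by ext ⟨i, j⟩; rfl
  left_inv _ := rfl
  right_inv f := by ext ⟨i, j⟩; rfl

def traceZeroSymmetric : Submodule R (Matrix ι ι R) :=
  symmetricSubmodule ι R ⊓ LinearMap.ker (traceLinearMap ι R R)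

variable {ι} (K : Type*) [Field K]

theorem finrank_symmetricSubmodule :
    finrank K (symmetricSubmodule ι K) = (Fintype.card ι + 1).choose 2 := by
  rw [(symmetricEquivSym2 ι K).finrank_eq, finrank_fintype_fun_eq_card, Sym2.card]

theorem finrank_traceZeroSymmetric_add_one [DecidableEq ι] [Nonempty ι] :
    finrank K (traceZeroSymmetric ι K) + 1 = (Fintype.card ι + 1).choose 2 := by
  inhabit ι
  have htrace : Function.Surjective (traceLinearMap ι K K ∘ₗ (symmetricSubmodule ι K).subtype) :=
    fun r => ⟨⟨diagonal (Pi.single default r), isSymm_diagonal _⟩, by simp⟩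
  have h := (traceLinearMap ι K K ∘ₗ (symmetricSubmodule ι K).subtype).finrank_range_add_finrank_ker
  rw [LinearMap.range_eq_top.mpr htrace, finrank_top, finrank_self, LinearMap.ker_comp,
    ← Submodule.finrank_map_subtype_eq, Submodule.map_comap_subtype] at h
  rw [← finrank_symmetricSubmodule K, ← h, add_comm]
  rfl

end Matrix

theorem Convex.exists_homeomorph_closedBall {E : Type*} [AddCommGroup E] [Module ℝ E]
    [TopologicalSpace E] [IsTopologicalAddGroup E] [ContinuousSMul ℝ E] [T2Space E]
    [FiniteDimensional ℝ E] {s : Set E} (hconv : Convex ℝ s) (hcpt : IsCompact s)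
    (hint : (interior s).Nonempty) {d : ℕ} (hd : finrank ℝ E = d) :
    Nonempty (s ≃ₜ Metric.closedBall (0 : EuclideanSpace ℝ (Fin d)) 1) := by
  let e : E ≃L[ℝ] EuclideanSpace ℝ (Fin d) :=
    .ofFinrankEq (hd.trans finrank_euclideanSpace_fin.symm)
  have hconv' : Convex ℝ (e '' s) := hconv.linear_image e.toLinearMap
  have hint' : (interior (e '' s)).Nonempty := e.toHomeomorph.image_interior s ▸ hint.image e
  have hcpt' : IsCompact (e '' s) := hcpt.image e.continuous
  obtain ⟨h, -, hclosure, -⟩ :=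
    exists_homeomorph_image_interior_closure_frontier_eq_unitBall hconv' hint' hcpt'.isBounded
  rw [hcpt'.isClosed.closure_eq] at hclosure
  exact ⟨(e.toHomeomorph.image s).trans ((h.image _).trans (.setCongr hclosure))⟩

section OrbitSpace

variable {ι : Type*} [Fintype ι]

abbrev FrobeniusSphere (ι : Type*) [Fintype ι] :=
  {M : Matrix ι ι ℝ // √(∑ i, ∑ j, M i j ^ 2) = 1}

def densityMatrices (ι : Type*) [Fintype ι] : Set (Matrix ι ι ℝ) :=
  {P | P.PosSemidef ∧ P.trace = 1}

attribute [local instance] frobeniusNormedAddCommGroup frobeniusNormedSpace in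
theorem isCompact_frobeniusSphere :
    IsCompact {M : Matrix ι ι ℝ | √(∑ i, ∑ j, M i j ^ 2) = 1} := by
  have h : {M : Matrix ι ι ℝ | √(∑ i, ∑ j, M i j ^ 2) = 1} = Metric.sphere 0 1 := by
    ext M
    simp [frobenius_norm_def, Real.sqrt_eq_rpow]
  rw [h]
  exact isCompact_sphere 0 1

instance : CompactSpace (FrobeniusSphere ι) :=
  isCompact_iff_compactSpace.mp isCompact_frobeniusSphere

theorem transpose_mul_self_mem_densityMatrices (A : FrobeniusSphere ι) :
    A.1ᵀ * A.1 ∈ densityMatrices ι := by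
  refine ⟨by simpa using posSemidef_conjTranspose_mul_self A.1, ?_⟩
  rw [trace_transpose_mul_self, ← Real.sqrt_eq_one, A.2]

theorem convex_densityMatrices : Convex ℝ (densityMatrices ι) := by
  rintro P ⟨hP, hPtr⟩ Q ⟨hQ, hQtr⟩ a b ha hb hab
  refine ⟨(hP.smul ha).add (hQ.smul hb), ?_⟩
  simp [trace_add, trace_smul, hPtr, hQtr, hab]

variable [DecidableEq ι]

variable (ι) in
def leftOrthogonalRel (A B : FrobeniusSphere ι) : Prop :=
  ∃ Q : Matrix ι ι ℝ, Qᵀ * Q = 1 ∧ B.1 = Q * A.1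

def orbitGram : Quot (leftOrthogonalRel ι) → densityMatrices ι :=
  Quot.lift (fun A => ⟨A.1ᵀ * A.1, transpose_mul_self_mem_densityMatrices A⟩) <| by
    rintro A B ⟨Q, hQ, hB⟩
    ext1
    simp only [hB, transpose_mul, Matrix.mul_assoc, ← Matrix.mul_assoc Qᵀ, hQ, Matrix.one_mul]

theorem orbitGram_injective : Function.Injective (orbitGram (ι := ι)) := by
  rintro ⟨A⟩ ⟨B⟩ h
  obtain ⟨Q, hQ, hB⟩ := exists_mem_unitaryGroup_mul_eq_of_conjTranspose_mul_self_eq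
    (A := A.1) (B := B.1) (by simpa [orbitGram] using congrArg Subtype.val h)
  exact Quot.sound ⟨Q, by simpa [star_eq_conjTranspose] using mem_unitaryGroup_iff'.mp hQ, hB⟩

open scoped MatrixOrder in
theorem orbitGram_surjective : Function.Surjective (orbitGram (ι := ι)) := by
  rintro ⟨P, hP, htrace⟩
  obtain ⟨B, rfl⟩ := CStarAlgebra.nonneg_iff_eq_star_mul_self.mp hP.nonneg
  have hB : Bᵀ * B = star B * B := by
    rw [star_eq_conjTranspose, conjTranspose_eq_transpose_of_trivial]
  refine ⟨Quot.mk _ ⟨B, ?_⟩, Subtype.ext hB⟩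
  rw [← trace_transpose_mul_self, hB, htrace, Real.sqrt_one]

theorem continuous_orbitGram : Continuous (orbitGram (ι := ι)) :=
  continuous_quot_lift _ <| .subtype_mk
    (continuous_subtype_val.matrix_transpose.matrix_mul continuous_subtype_val) _

noncomputable def orbitSpaceHomeomorphDensityMatrices :
    Quot (leftOrthogonalRel ι) ≃ₜ densityMatrices ι :=
  Continuous.homeoOfEquivCompactToT2
    (f := .ofBijective orbitGram ⟨orbitGram_injective, orbitGram_surjective⟩) continuous_orbitGram

theorem isCompact_densityMatrices : IsCompact (densityMatrices ι) :=
  isCompact_iff_compactSpace.mpr orbitSpaceHomeomorphDensityMatrices.compactSpace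

end OrbitSpace

section TraceOneChart

variable {ι : Type*} [Fintype ι] [DecidableEq ι]

noncomputable def traceOneChart (w : traceZeroSymmetric ι ℝ) : Matrix ι ι ℝ :=
  (Fintype.card ι : ℝ)⁻¹ • 1 + w

theorem isEmbedding_traceOneChart : IsEmbedding (traceOneChart (ι := ι)) :=
  (Homeomorph.addLeft _).isEmbedding.comp IsEmbedding.subtypeVal

theorem convex_preimage_traceOneChart :
    Convex ℝ (traceOneChart ⁻¹' densityMatrices ι) :=
  (convex_densityMatrices.translate_preimage_right _).linear_preimage
    (traceZeroSymmetric ι ℝ).subtype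

variable [Nonempty ι]

theorem densityMatrices_subset_range_traceOneChart :
    densityMatrices ι ⊆ Set.range (traceOneChart (ι := ι)) := by
  rintro P ⟨hP, htrace⟩
  have hn : (Fintype.card ι : ℝ) ≠ 0 := by positivity
  refine ⟨⟨P - (Fintype.card ι : ℝ)⁻¹ • 1, ?_, ?_⟩, by simp [traceOneChart]⟩
  · exact (isHermitian_iff_isSymm.mp hP.isHermitian).sub (isSymm_one.smul _)
  · simp [htrace, hn]

noncomputable def preimageTraceOneChartHomeomorph :
    traceOneChart ⁻¹' densityMatrices ι ≃ₜ densityMatrices ι :=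
  isEmbedding_traceOneChart.homeomorphOfSubsetRange densityMatrices_subset_range_traceOneChart

theorem isCompact_preimage_traceOneChart : IsCompact (traceOneChart ⁻¹' densityMatrices ι) :=
  have := isCompact_iff_compactSpace.mp (isCompact_densityMatrices (ι := ι))
  isCompact_iff_compactSpace.mpr preimageTraceOneChartHomeomorph.symm.compactSpace

theorem zero_mem_interior_preimage_traceOneChart :
    (0 : traceZeroSymmetric ι ℝ) ∈ interior (traceOneChart ⁻¹' densityMatrices ι) := by
  let opNorm (w : traceZeroSymmetric ι ℝ) : ℝ := ‖toEuclideanCLM (𝕜 := ℝ) (w : Matrix ι ι ℝ)‖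
  have hcont : Continuous opNorm := continuous_norm.comp <|
    (LinearMap.continuous_of_finiteDimensional
      (toEuclideanCLM (𝕜 := ℝ) (n := ι)).toAlgEquiv.toLinearMap).comp continuous_subtype_val
  have hzero : opNorm 0 < (Fintype.card ι : ℝ)⁻¹ := by simp [opNorm, Fintype.card_pos]
  refine mem_interior_iff_mem_nhds.mpr <| Filter.mem_of_superset
    ((isOpen_lt hcont continuous_const).mem_nhds hzero) fun w hw => ?_
  refine ⟨w.2.1.posSemidef_smul_one_add hw.le, ?_⟩
  have : (w : Matrix ι ι ℝ).trace = 0 := w.2.2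
  simp [traceOneChart, trace_add, this]

end TraceOneChart

theorem finrank_traceZeroSymmetric_fin {n : ℕ} (hn : 1 ≤ n) :
    finrank ℝ (traceZeroSymmetric (Fin n) ℝ) = (n ^ 2 + n - 2) / 2 := by
  have : Nonempty (Fin n) := ⟨⟨0, hn⟩⟩
  have h := finrank_traceZeroSymmetric_add_one (ι := Fin n) ℝ
  rw [Fintype.card_fin, Nat.choose_two_right, add_tsub_cancel_right] at h
  have : n ^ 2 + n = (n + 1) * n := by ring
  omega

/-- Orbit space of the sphere of normalized `n×n` matrices by the left
`O(n)`-action is a closed ball of dimension `(n² + n - 2)/2`. -/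
theorem Y_n_n_quotient_O_homeomorphic_ball (n : ℕ) (hn : 1 ≤ n) :
    Nonempty (Quot
      (fun A B : {M : Matrix (Fin n) (Fin n) ℝ //
          Real.sqrt (∑ i, ∑ j, M i j ^ 2) = 1} =>
        ∃ Q : Matrix (Fin n) (Fin n) ℝ, Qᵀ * Q = 1 ∧ B.1 = Q * A.1)
      ≃ₜ Metric.closedBall (0 : EuclideanSpace ℝ (Fin ((n ^ 2 + n - 2) / 2))) 1) := by
  have : Nonempty (Fin n) := ⟨⟨0, hn⟩⟩
  obtain ⟨e⟩ := (convex_preimage_traceOneChart (ι := Fin n)).exists_homeomorph_closedBall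
    isCompact_preimage_traceOneChart ⟨0, zero_mem_interior_preimage_traceOneChart⟩
    (finrank_traceZeroSymmetric_fin hn)
  exact ⟨orbitSpaceHomeomorphDensityMatrices.trans (preimageTraceOneChartHomeomorph.symm.trans e)⟩
end

section
/- Let S⁵ = {(z₀,z₁,z₂) ∈ ℂ³ : |z₀|² + |z₁|² + |z₂|² = 1}, and define z ~ w iff there exists λ ∈ ℂ with |λ| = 1 such that w = (λz₀, λz₁, λz₂) or w = (λ·conj(z₀), λ·conj(z₁), λ·conj(z₂)). Then the quotient space S⁵/~ is homeomorphic to S⁴. (Kuiper–Massey theorem: ℂP²/conj ≅ S⁴, where conj is the involution of complex conjugation of all homogeneous coordinates.) -/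
/-- The unit sphere `S⁵ ⊂ ℂ³`. -/
abbrev S5 : Type :=
  {z : ℂ × ℂ × ℂ // ‖z.1‖ ^ 2 + ‖z.2.1‖ ^ 2 + ‖z.2.2‖ ^ 2 = 1}

/-- `z ~ λz` and `z ~ λ·conj(z)` for unit complex numbers `λ`. -/
def rel10 (x y : S5) : Prop :=
  ∃ lam : ℂ, ‖lam‖ = 1 ∧
    ((y.1.1 = lam * x.1.1 ∧ y.1.2.1 = lam * x.1.2.1 ∧ y.1.2.2 = lam * x.1.2.2) ∨
     (y.1.1 = lam * (starRingEnd ℂ) x.1.1 ∧ y.1.2.1 = lam * (starRingEnd ℂ) x.1.2.1 ∧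
      y.1.2.2 = lam * (starRingEnd ℂ) x.1.2.2))

/-!
Send `z ∈ S⁵` to the real Gram matrix `(⟪z k, z l⟫_ℝ)` of its coordinates, viewed as three
vectors of `ℂ = ℝ²`. Two triples have the same Gram matrix iff they differ by an isometry of `ℝ²`,
i.e. by a rotation `z ↦ λ z` or a reflection `z ↦ λ z̄`; so `S⁵/~` is the set of Gram matrices.
These are exactly the trace-one positive semidefinite real `3 × 3` matrices of rank at most `2`,
which form the boundary of the compact convex body of all trace-one positive semidefinite
matrices. That body has nonempty interior in the `5`-dimensional space of trace-one symmetric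
matrices, so its boundary is a `4`-sphere.
-/

open Matrix ComplexConjugate Topology Filter Metric Set

namespace Complex

theorem eq_or_eq_conj_of_re_eq_of_norm_eq {a b : ℂ} (hre : a.re = b.re) (hn : ‖a‖ = ‖b‖) :
    a = b ∨ a = conj b := by
  have him : a.im ^ 2 = b.im ^ 2 := by
    have := congrArg (· ^ 2) hn
    simp only [Complex.sq_norm, normSq_apply] at this
    rw [hre] at this
    linear_combination this
  rcases sq_eq_sq_iff_eq_or_eq_neg.1 him with h | h
  · exact .inl (ext hre h)
  · exact .inr (ext (by simpa using hre) (by simpa using h))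

theorem im_mul_im_eq_zero_of_re_conj_mul_eq {a b : ℂ}
    (h : (conj a * conj b).re = (a * conj b).re) : a.im * b.im = 0 := by
  simp only [mul_re, conj_re, conj_im] at h
  linarith

theorem forall_eq_or_forall_eq_conj {ι : Type*} {p q : ι → ℂ}
    (hpq : ∀ k, q k = p k ∨ q k = conj (p k))
    (hcross : ∀ k m, (q k * conj (q m)).re = (p k * conj (p m)).re) :
    (∀ k, q k = p k) ∨ ∀ k, q k = conj (p k) := by
  by_cases hall : ∀ k, q k = p k
  · exact .inl hall
  push Not at hall
  obtain ⟨k, hk⟩ := hall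
  have hqk : q k = conj (p k) := (hpq k).resolve_left hk
  have hpk : (p k).im ≠ 0 := fun h0 => hk (by rw [hqk, conj_eq_iff_im.2 h0])
  -- an unreflected `q m = p m` with `p m` not real would contradict `hcross k m`
  refine .inr fun m => (hpq m).elim (fun hm => ?_) id
  have := hcross k m
  rw [hqk, hm] at this
  have hpm := (mul_eq_zero.1 (im_mul_im_eq_zero_of_re_conj_mul_eq this)).resolve_left hpk
  rw [hm, conj_eq_iff_im.2 hpm]

end Complex

namespace Matrix

variable {ι : Type*}

theorem norm_eq_of_gram_eq {E : Type*} [NormedAddCommGroup E] [InnerProductSpace ℝ E]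
    {v w : ι → E} (h : gram ℝ w = gram ℝ v) (k : ι) : ‖w k‖ = ‖v k‖ := by
  have := congr_fun (congr_fun h k) k
  simp only [gram_apply, real_inner_self_eq_norm_sq] at this
  exact (pow_left_inj₀ (norm_nonneg _) (norm_nonneg _) two_ne_zero).1 this

theorem trace_gram {E : Type*} [NormedAddCommGroup E] [InnerProductSpace ℝ E] [Fintype ι]
    (v : ι → E) : (gram ℝ v).trace = ∑ i, ‖v i‖ ^ 2 := by
  simp [trace]

theorem det_gram_eq_zero_of_finrank_lt {𝕜 E : Type*} [RCLike 𝕜] [NormedAddCommGroup E]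
    [InnerProductSpace 𝕜 E] [FiniteDimensional 𝕜 E] [Fintype ι] [DecidableEq ι] (v : ι → E)
    (h : Module.finrank 𝕜 E < Fintype.card ι) : (gram 𝕜 v).det = 0 := by
  by_contra hdet
  exact h.not_ge (det_gram_ne_zero_iff_linearIndependent.1 hdet).fintype_card_le_finrank

theorem gram_complex_apply (z : ι → ℂ) (k l : ι) : gram ℝ z k l = (z k * conj (z l)).re := by
  rw [gram_apply, Complex.inner, ← Complex.conj_re, map_mul, Complex.conj_conj, mul_comm]

theorem exists_eq_mul_or_eq_mul_conj_of_gram_eq {z w : ι → ℂ} (h : gram ℝ w = gram ℝ z) :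
    ∃ lam : ℂ, ‖lam‖ = 1 ∧ ((∀ k, w k = lam * z k) ∨ ∀ k, w k = lam * conj (z k)) := by
  have hre (k l : ι) : (w k * conj (w l)).re = (z k * conj (z l)).re := by
    simpa only [gram_complex_apply] using congr_fun (congr_fun h k) l
  have hnorm := norm_eq_of_gram_eq h
  by_cases hz : ∀ j, z j = 0
  · exact ⟨1, by simp, .inl fun k => by simpa [hz k] using hnorm k⟩
  push Not at hz
  obtain ⟨j, hj⟩ := hz
  have hwj : conj (w j) ≠ 0 := by
    rwa [map_ne_zero, ← norm_ne_zero_iff, hnorm j, norm_ne_zero_iff]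
  have hlam {a : ℂ} (ha : ‖a‖ = ‖z j‖) : ‖a / conj (w j)‖ = 1 := by
    rw [norm_div, Complex.norm_conj, hnorm j, ha, div_self (norm_ne_zero_iff.2 hj)]
  -- rotate `z` and `w` so that their `j`-th entries become the same positive real number
  set p : ι → ℂ := fun k => z k * conj (z j)
  set q : ι → ℂ := fun k => w k * conj (w j)
  have hw (k : ι) : w k = q k / conj (w j) := by simp [q, hwj]
  have hpq (k : ι) : q k = p k ∨ q k = conj (p k) :=
    Complex.eq_or_eq_conj_of_re_eq_of_norm_eq (hre k j) (by simp [p, q, hnorm])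
  have hcross (k m : ι) : (q k * conj (q m)).re = (p k * conj (p m)).re := by
    have (u : ι → ℂ) : u k * conj (u j) * conj (u m * conj (u j)) =
        u k * conj (u m) * (‖u j‖ ^ 2 : ℝ) := by
      rw [Complex.ofReal_pow, ← Complex.mul_conj']
      simp only [map_mul, Complex.conj_conj]
      ring
    simp only [p, q]
    rw [this w, this z, Complex.re_mul_ofReal, Complex.re_mul_ofReal, hre, hnorm]
  rcases Complex.forall_eq_or_forall_eq_conj hpq hcross with hall | hall
  · refine ⟨conj (z j) / conj (w j), hlam (by simp), .inl fun k => ?_⟩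
    rw [hw, hall]
    ring
  · refine ⟨z j / conj (w j), hlam rfl, .inr fun k => ?_⟩
    rw [hw, hall]
    simp only [p, map_mul, Complex.conj_conj]
    ring

theorem gram_complex_eq_gram_iff {z w : ι → ℂ} :
    gram ℝ w = gram ℝ z ↔
      ∃ lam : ℂ, ‖lam‖ = 1 ∧ ((∀ k, w k = lam * z k) ∨ ∀ k, w k = lam * conj (z k)) := by
  refine ⟨exists_eq_mul_or_eq_mul_conj_of_gram_eq, ?_⟩
  rintro ⟨lam, hlam, hw | hw⟩
  all_goals
    have hl : lam * conj lam = 1 := by simp [Complex.mul_conj', hlam]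
    ext k l
    simp only [gram_complex_apply, hw, map_mul, Complex.conj_conj]
  · rw [show lam * z k * (conj lam * conj (z l)) = z k * conj (z l) by
      linear_combination (z k * conj (z l)) * hl]
  · rw [show lam * conj (z k) * (conj lam * z l) = conj (z k * conj (z l)) by
      simp only [map_mul, Complex.conj_conj]; linear_combination (conj (z k) * z l) * hl,
      Complex.conj_re]

theorem exists_gram_eq_of_posSemidef_of_det_eq_zero {A : Matrix (Fin 3) (Fin 3) ℝ}
    (hA : A.PosSemidef) (hdet : A.det = 0) : ∃ z : Fin 3 → ℂ, gram ℝ z = A := by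
  set U := hA.isHermitian.eigenvectorUnitary.1
  set d := hA.isHermitian.eigenvalues
  have hspec (j k : Fin 3) : A j k = ∑ i, d i * (U j i * U k i) := by
    conv_lhs => rw [hA.isHermitian.spectral_theorem]
    simp only [RCLike.ofReal_real_eq_id, CompTriple.comp_eq, Unitary.conjStarAlgAut_apply,
      mul_apply, IsHermitian.eigenvectorUnitary_apply, diagonal_apply, mul_ite, mul_zero,
      Finset.sum_ite_eq', Finset.mem_univ, if_true, star_apply, star_trivial, d, U]
    exact Finset.sum_congr rfl fun _ _ => by ring
  obtain ⟨i₀, hi₀⟩ : ∃ i, d i = 0 := by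
    simpa [hA.isHermitian.det_eq_prod_eigenvalues, Finset.prod_eq_zero_iff] using hdet
  obtain ⟨p, q, hpq⟩ : ∃ p q, ∀ j k, A j k = d p * (U j p * U k p) + d q * (U j q * U k q) := by
    fin_cases i₀ <;> dsimp at hi₀
    · exact ⟨1, 2, fun j k => by simp [hspec, Fin.sum_univ_three, hi₀]⟩
    · exact ⟨0, 2, fun j k => by simp [hspec, Fin.sum_univ_three, hi₀]⟩
    · exact ⟨0, 1, fun j k => by simp [hspec, Fin.sum_univ_three, hi₀]⟩
  refine ⟨fun j => ⟨√(d p) * U j p, √(d q) * U j q⟩, Matrix.ext fun j k => ?_⟩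
  have hp := Real.mul_self_sqrt (hA.eigenvalues_nonneg p)
  have hq := Real.mul_self_sqrt (hA.eigenvalues_nonneg q)
  simp only [gram_apply, Complex.inner, Complex.mul_re, Complex.conj_re, Complex.conj_im, hpq]
  linear_combination (U j p * U k p) * hp + (U j q * U k q) * hq

theorem isOpen_setOf_posDef {X n : Type*} [TopologicalSpace X] [Fintype n]
    {A : X → Matrix n n ℝ} (hA : Continuous A) (hH : ∀ x, (A x).IsHermitian) :
    IsOpen {x | (A x).PosDef} := by
  refine isOpen_iff_mem_nhds.2 fun x₀ hx₀ => ?_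
  have hform : Continuous fun p : X × (n → ℝ) => p.2 ⬝ᵥ A p.1 *ᵥ p.2 :=
    continuous_snd.dotProduct ((hA.comp continuous_fst).matrix_mulVec continuous_snd)
  -- positivity on the compact unit sphere is an open condition, and it extends to all `u ≠ 0`
  -- by homogeneity
  have hsphere : ∀ᶠ x in 𝓝 x₀, ∀ u ∈ sphere (0 : n → ℝ) 1, 0 < u ⬝ᵥ A x *ᵥ u :=
    (isCompact_sphere 0 1).eventually_forall_of_forall_eventually fun u hu =>
      continuousAt_const.eventually_lt hform.continuousAt
        (hx₀.dotProduct_mulVec_pos (ne_zero_of_mem_unit_sphere ⟨u, hu⟩))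
  filter_upwards [hsphere] with x hx
  refine .of_dotProduct_mulVec_pos (hH x) fun u hu => ?_
  have hnorm : 0 < ‖u‖ := norm_pos_iff.2 hu
  have := hx (‖u‖⁻¹ • u) (by simp [norm_smul, hnorm.ne'])
  simp only [mulVec_smul, dotProduct_smul, smul_dotProduct, smul_eq_mul] at this
  simpa [star_trivial] using
    pos_of_mul_pos_right (pos_of_mul_pos_right this (by positivity)) (by positivity)

theorem isClosed_setOf_posSemidef {X n : Type*} [TopologicalSpace X] [Fintype n]
    {A : X → Matrix n n ℝ} (hA : Continuous A) (hH : ∀ x, (A x).IsHermitian) :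
    IsClosed {x | (A x).PosSemidef} := by
  simp only [posSemidef_iff_dotProduct_mulVec, hH, true_and, ofPred_forall, star_trivial]
  exact isClosed_iInter fun u => isClosed_le continuous_const
    (continuous_const.dotProduct (hA.matrix_mulVec continuous_const))

end Matrix

noncomputable def traceOneSym (v : EuclideanSpace ℝ (Fin 5)) : Matrix (Fin 3) (Fin 3) ℝ :=
  !![1/3 + v 0, v 2, v 3; v 2, 1/3 + v 1, v 4; v 3, v 4, 1/3 - v 0 - v 1]

noncomputable def symCoords (A : Matrix (Fin 3) (Fin 3) ℝ) : EuclideanSpace ℝ (Fin 5) :=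
  !₂[A 0 0 - 1/3, A 1 1 - 1/3, A 0 1, A 0 2, A 1 2]

theorem symCoords_traceOneSym (v : EuclideanSpace ℝ (Fin 5)) : symCoords (traceOneSym v) = v := by
  ext i
  fin_cases i <;> simp [symCoords, traceOneSym]

theorem traceOneSym_symCoords {A : Matrix (Fin 3) (Fin 3) ℝ} (hA : A.IsHermitian)
    (htr : A.trace = 1) : traceOneSym (symCoords A) = A := by
  have h (i j : Fin 3) : A j i = A i j := by simpa using hA.apply i j
  simp only [trace, Fin.sum_univ_three, diag_apply] at htr
  ext i j
  fin_cases i <;> fin_cases j <;>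
    simp only [traceOneSym, symCoords, of_apply, cons_val', cons_val_zero, cons_val_one, cons_val,
      cons_val_fin_one, add_sub_cancel, Fin.zero_eta, Fin.mk_one, Fin.reduceFinMk] <;>
    linarith [h 0 1, h 0 2, h 1 2]

theorem traceOneSym_injective : Function.Injective traceOneSym :=
  Function.LeftInverse.injective symCoords_traceOneSym

theorem isHermitian_traceOneSym (v : EuclideanSpace ℝ (Fin 5)) : (traceOneSym v).IsHermitian := by
  ext i j
  fin_cases i <;> fin_cases j <;> rfl

theorem trace_traceOneSym (v : EuclideanSpace ℝ (Fin 5)) : (traceOneSym v).trace = 1 := by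
  simp only [trace, Fin.sum_univ_three, diag_apply, traceOneSym, of_apply, cons_val',
    cons_val_zero, cons_val_one, cons_val, cons_val_fin_one]
  ring

theorem continuous_traceOneSym : Continuous traceOneSym := by
  unfold traceOneSym
  fun_prop

theorem continuous_symCoords : Continuous symCoords := by
  unfold symCoords
  fun_prop

theorem traceOneSym_zero : traceOneSym 0 = (1/3 : ℝ) • 1 := by
  ext i j
  fin_cases i <;> fin_cases j <;> simp [traceOneSym]

theorem traceOneSym_add {s t : ℝ} (hst : s + t = 1) (v w : EuclideanSpace ℝ (Fin 5)) :
    traceOneSym (s • v + t • w) = s • traceOneSym v + t • traceOneSym w := by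
  obtain rfl : t = 1 - s := by linarith
  ext i j
  fin_cases i <;> fin_cases j <;>
    simp only [traceOneSym, PiLp.add_apply, PiLp.smul_apply, smul_eq_mul, smul_of, smul_cons,
      Matrix.smul_empty, Matrix.add_apply, of_apply, cons_val', cons_val_zero, cons_val_one,
      cons_val, cons_val_fin_one, Fin.zero_eta, Fin.mk_one, Fin.reduceFinMk] <;> ring

theorem traceOneSym_smul (c : ℝ) (v : EuclideanSpace ℝ (Fin 5)) :
    traceOneSym (c • v) = c • traceOneSym v + ((1 - c) / 3) • 1 := by
  simpa [traceOneSym_zero, smul_smul, div_eq_mul_inv] using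
    traceOneSym_add (add_sub_cancel c 1) v 0

def psdBody : Set (EuclideanSpace ℝ (Fin 5)) := {v | (traceOneSym v).PosSemidef}

theorem convex_psdBody : Convex ℝ psdBody := by
  intro v hv w hw s t hs ht hst
  simpa only [psdBody, mem_ofPred_eq, traceOneSym_add hst] using (hv.smul hs).add (hw.smul ht)

theorem isClosed_psdBody : IsClosed psdBody :=
  isClosed_setOf_posSemidef continuous_traceOneSym isHermitian_traceOneSym

theorem setOf_posDef_subset_interior_psdBody :
    {v | (traceOneSym v).PosDef} ⊆ interior psdBody :=
  interior_maximal (fun _ hv => hv.posSemidef)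
    (isOpen_setOf_posDef continuous_traceOneSym isHermitian_traceOneSym)

theorem zero_mem_interior_psdBody : 0 ∈ interior psdBody :=
  setOf_posDef_subset_interior_psdBody <| by
    rw [mem_ofPred_eq, traceOneSym_zero]
    exact PosDef.one.smul (by norm_num)

theorem isBounded_psdBody : Bornology.IsBounded psdBody := by
  refine (isBounded_closedBall (x := 0) (r := 3)).subset fun v hv => ?_
  have hq (a b c : ℝ) : 0 ≤ (1/3 + v 0) * a ^ 2 + (1/3 + v 1) * b ^ 2
      + (1/3 - v 0 - v 1) * c ^ 2 + 2 * (v 2 * a * b + v 3 * a * c + v 4 * b * c) := by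
    have := hv.dotProduct_mulVec_nonneg ![a, b, c]
    simp only [dotProduct, mulVec, traceOneSym, star_trivial, Fin.sum_univ_three, of_apply,
      cons_val', cons_val_zero, cons_val_one, cons_val, cons_val_fin_one] at this
    linear_combination this
  have h₀ := hq 1 0 0; have h₁ := hq 0 1 0; have h₂ := hq 0 0 1
  have h₀₁ := hq 1 1 0; have h₀₁' := hq 1 (-1) 0
  have h₀₂ := hq 1 0 1; have h₀₂' := hq 1 0 (-1)
  have h₁₂ := hq 0 1 1; have h₁₂' := hq 0 1 (-1)
  norm_num at h₀ h₁ h₂ h₀₁ h₀₁' h₀₂ h₀₂' h₁₂ h₁₂'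
  have hsq_le {t : ℝ} (h₁ : -1 ≤ t) (h₂ : t ≤ 1) : t ^ 2 ≤ 1 := by nlinarith
  have hsq : ‖v‖ ^ 2 ≤ 3 ^ 2 := by
    rw [EuclideanSpace.norm_sq_eq, Fin.sum_univ_five]
    simp only [Real.norm_eq_abs, sq_abs]
    linarith [hsq_le (t := v 0) (by linarith) (by linarith),
      hsq_le (t := v 1) (by linarith) (by linarith), hsq_le (t := v 2) (by linarith) (by linarith),
      hsq_le (t := v 3) (by linarith) (by linarith), hsq_le (t := v 4) (by linarith) (by linarith)]
  rw [mem_closedBall, dist_zero_right]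
  exact (pow_le_pow_iff_left₀ (norm_nonneg v) (by norm_num) two_ne_zero).1 hsq

-- Pushing `v` radially away from the interior point `0` makes the form negative at `x`.
theorem notMem_interior_psdBody_of_mulVec_eq_zero {v : EuclideanSpace ℝ (Fin 5)}
    {x : Fin 3 → ℝ} (hx : x ≠ 0) (hvx : traceOneSym v *ᵥ x = 0) : v ∉ interior psdBody := by
  intro hv
  have hnear : ∀ᶠ c in 𝓝 (1 : ℝ), c • v ∈ psdBody := by
    have : Tendsto (fun c : ℝ => c • v) (𝓝 1) (𝓝 v) := by
      simpa using (tendsto_id (x := 𝓝 (1 : ℝ))).smul_const v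
    exact this.eventually (mem_interior_iff_mem_nhds.1 hv)
  obtain ⟨c, hc, hc1⟩ := ((hnear.filter_mono nhdsWithin_le_nhds).and self_mem_nhdsWithin).exists
    (f := 𝓝[>] (1 : ℝ))
  have hform := (hc : (traceOneSym (c • v)).PosSemidef).dotProduct_mulVec_nonneg x
  rw [traceOneSym_smul, add_mulVec, smul_mulVec, hvx, smul_zero, zero_add, smul_mulVec,
    one_mulVec, dotProduct_smul, smul_eq_mul] at hform
  have hpos : 0 < star x ⬝ᵥ x := dotProduct_star_self_pos_iff.2 hx
  have hneg : (1 - c) / 3 < 0 := by linarith [show 1 < c from hc1]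
  linarith [mul_neg_of_neg_of_pos hneg hpos]

theorem frontier_psdBody :
    frontier psdBody = {v | (traceOneSym v).PosSemidef ∧ (traceOneSym v).det = 0} := by
  ext v
  rw [isClosed_psdBody.frontier_eq, Set.mem_sdiff]
  refine ⟨fun ⟨hv, hint⟩ => ⟨hv, ?_⟩, fun ⟨hv, hdet⟩ => ⟨hv, ?_⟩⟩
  · by_contra hdet
    exact hint (setOf_posDef_subset_interior_psdBody (hv.posDef_iff_det_ne_zero.2 hdet))
  · obtain ⟨x, hx, hvx⟩ := exists_mulVec_eq_zero_iff.2 hdet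
    exact notMem_interior_psdBody_of_mulVec_eq_zero hx hvx

def toFin3 (z : ℂ × ℂ × ℂ) : Fin 3 → ℂ := ![z.1, z.2.1, z.2.2]

theorem toFin3_mk_apply (z : Fin 3 → ℂ) : toFin3 (z 0, z 1, z 2) = z := by
  ext i
  fin_cases i <;> rfl

theorem rel10_iff (x y : S5) : rel10 x y ↔ ∃ lam : ℂ, ‖lam‖ = 1 ∧
    ((∀ k, toFin3 y.1 k = lam * toFin3 x.1 k) ∨ ∀ k, toFin3 y.1 k = lam * conj (toFin3 x.1 k)) := by
  simp [rel10, Fin.forall_fin_succ, toFin3]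

theorem trace_gram_toFin3 (x : S5) : (gram ℝ (toFin3 x.1)).trace = 1 := by
  rw [trace_gram, Fin.sum_univ_three]
  exact x.2

noncomputable def gramCoords (x : S5) : EuclideanSpace ℝ (Fin 5) := symCoords (gram ℝ (toFin3 x.1))

theorem traceOneSym_gramCoords (x : S5) : traceOneSym (gramCoords x) = gram ℝ (toFin3 x.1) :=
  traceOneSym_symCoords (isHermitian_gram ℝ _) (trace_gram_toFin3 x)

theorem continuous_gramCoords : Continuous gramCoords :=
  continuous_symCoords.comp (by unfold gram toFin3; fun_prop)

theorem gramCoords_eq_gramCoords_iff {x y : S5} : gramCoords x = gramCoords y ↔ rel10 x y := by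
  rw [← traceOneSym_injective.eq_iff, traceOneSym_gramCoords, traceOneSym_gramCoords, eq_comm,
    gram_complex_eq_gram_iff, rel10_iff]

theorem range_gramCoords : range gramCoords = frontier psdBody := by
  rw [frontier_psdBody]
  ext v
  constructor
  · rintro ⟨x, rfl⟩
    rw [mem_ofPred_eq, traceOneSym_gramCoords]
    exact ⟨posSemidef_gram ℝ _, det_gram_eq_zero_of_finrank_lt _ (by simp)⟩
  · rintro ⟨hv, hdet⟩
    obtain ⟨z, hz⟩ := exists_gram_eq_of_posSemidef_of_det_eq_zero hv hdet
    have hS : ‖z 0‖ ^ 2 + ‖z 1‖ ^ 2 + ‖z 2‖ ^ 2 = 1 := by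
      rw [← Fin.sum_univ_three (fun i => ‖z i‖ ^ 2), ← trace_gram, hz, trace_traceOneSym]
    refine ⟨⟨(z 0, z 1, z 2), hS⟩, ?_⟩
    rw [gramCoords, toFin3_mk_apply, hz, symCoords_traceOneSym]

instance : CompactSpace S5 := by
  refine isCompact_iff_compactSpace.1 <| Metric.isCompact_of_isClosed_isBounded
    (isClosed_eq (by fun_prop) continuous_const) (isBounded_iff_forall_norm_le.2 ⟨1, ?_⟩)
  rintro z (hz : ‖z.1‖ ^ 2 + ‖z.2.1‖ ^ 2 + ‖z.2.2‖ ^ 2 = 1)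
  simp only [Prod.norm_def]
  refine max_le ?_ (max_le ?_ ?_) <;>
    nlinarith [norm_nonneg z.1, norm_nonneg z.2.1, norm_nonneg z.2.2]

/-- Kuiper–Massey theorem: `ℂP²/conj ≅ S⁴`. -/
theorem CP2_quotient_conj_homeomorphic_S4 :
    Nonempty (Quot rel10 ≃ₜ Metric.sphere (0 : EuclideanSpace ℝ (Fin 5)) 1) := by
  let g : Quot rel10 → EuclideanSpace ℝ (Fin 5) :=
    Quot.lift gramCoords fun _ _ => gramCoords_eq_gramCoords_iff.2
  have hg : IsClosedEmbedding g := by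
    refine (continuous_quot_lift _ continuous_gramCoords).isClosedEmbedding ?_
    rintro ⟨x⟩ ⟨y⟩ h
    exact Quot.sound (gramCoords_eq_gramCoords_iff.1 h)
  have hrange : range g = frontier psdBody := (range_quot_lift _).trans range_gramCoords
  obtain ⟨h, -, -, hsphere⟩ := exists_homeomorph_image_interior_closure_frontier_eq_unitBall
    convex_psdBody ⟨0, zero_mem_interior_psdBody⟩ isBounded_psdBody
  exact ⟨hg.isEmbedding.toHomeomorph.trans <| (Homeomorph.setCongr hrange).trans <|
    (h.image _).trans (Homeomorph.setCongr hsphere)⟩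
end

section
/- Let T² = ℝ²/ℤ² be the 2-torus and let σ: T² → T² be the involution σ(a) = −a. Then the quotient space T²/σ (identifying each point with its σ-image) is homeomorphic to S². -/
/-!
Identify each factor of `T²` with the unit circle in `ℂ`, so that `σ` becomes `(z, w) ↦ (z̄, w̄)`.
The functions `Re z`, `Re w`, `Im z · Im w` are `σ`-invariant and separate the `σ`-orbits, so
they map `T²/σ` bijectively onto the pillowcase surface
`{(u, v, t) | u², v² ≤ 1, t² = (1 - u²)(1 - v²)}`. This surface meets every ray from the origin
exactly once: on the ray through a unit vector, the defining equation in the squared scale changes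
sign on `[1, 2]`, and two points `x`, `c • x` of the surface satisfy `(1 - c²)(1 - c² u² v²) = 0`,
which forces `c = 1`. Radial projection then identifies the surface with `S²`, and a continuous
bijection from a compact space onto a Hausdorff space is a homeomorphism.
-/

/-- The 2-torus `T² = ℝ²/ℤ²`. -/
abbrev Torus2 : Type := AddCircle (1 : ℝ) × AddCircle (1 : ℝ)

open Metric Relation

noncomputable def Continuous.quotHomeomorph {X Y : Type*} [TopologicalSpace X] [CompactSpace X]
    [TopologicalSpace Y] [T2Space Y] {r : X → X → Prop} {f : X → Y} (hf : Continuous f)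
    (hsurj : Function.Surjective f) (hr : ∀ a b, r a b → f a = f b)
    (hfib : ∀ a b, f a = f b → EqvGen r a b) : Quot r ≃ₜ Y :=
  have hinj : Function.Injective (Quot.lift f hr) := by
    rintro ⟨a⟩ ⟨b⟩ h
    exact Quot.eqvGen_sound (hfib a b h)
  (continuous_quot_lift hr hf).homeoOfEquivCompactToT2
    (f := Equiv.ofBijective _ ⟨hinj, fun y => (hsurj y).imp' (Quot.mk r) fun _ => id⟩)

namespace Circle

lemma re_sq_add_im_sq (z : Circle) : (z : ℂ).re ^ 2 + (z : ℂ).im ^ 2 = 1 := by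
  rw [sq, sq, ← Complex.normSq_apply, normSq_coe]

lemma exists_re_im {x y : ℝ} (h : x ^ 2 + y ^ 2 = 1) :
    ∃ z : Circle, (z : ℂ).re = x ∧ (z : ℂ).im = y :=
  ⟨⟨⟨x, y⟩, by
    simp only [Submonoid.unitSphere, Submonoid.mem_mk, Subsemigroup.mem_mk, mem_sphere_iff_norm,
      sub_zero, Complex.norm_def, Complex.normSq_apply, Real.sqrt_eq_one]
    nlinarith⟩,
    rfl, rfl⟩

@[simp] lemma re_inv (z : Circle) : ((z⁻¹ : Circle) : ℂ).re = (z : ℂ).re := by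
  rw [coe_inv_eq_conj, Complex.conj_re]

@[simp] lemma im_inv (z : Circle) : ((z⁻¹ : Circle) : ℂ).im = -(z : ℂ).im := by
  rw [coe_inv_eq_conj, Complex.conj_im]

lemma inv_eq_self_of_im_eq_zero {z : Circle} (h : (z : ℂ).im = 0) : z⁻¹ = z :=
  Circle.ext <| Complex.ext (re_inv z) (by rw [im_inv, h, neg_zero])

lemma eq_or_eq_inv_of_re_eq {z w : Circle} (h : (w : ℂ).re = (z : ℂ).re) : w = z ∨ w = z⁻¹ := by
  have him : (w : ℂ).im ^ 2 = (z : ℂ).im ^ 2 := by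
    linarith [re_sq_add_im_sq z, re_sq_add_im_sq w, congrArg (· ^ 2) h]
  rcases sq_eq_sq_iff_eq_or_eq_neg.mp him with him | him
  · exact .inl (Circle.ext (Complex.ext h him))
  · exact .inr (Circle.ext (Complex.ext (h.trans (re_inv z).symm) (him.trans (im_inv z).symm)))

end Circle

namespace Pillowcase

local notation "ℝ³" => EuclideanSpace ℝ (Fin 3)

def pillow (p : Circle × Circle) : ℝ³ :=
  !₂[(p.1 : ℂ).re, (p.2 : ℂ).re, (p.1 : ℂ).im * (p.2 : ℂ).im]

def pillowSurface : Set ℝ³ :=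
  {x | x 0 ^ 2 ≤ 1 ∧ x 1 ^ 2 ≤ 1 ∧ x 2 ^ 2 = (1 - x 0 ^ 2) * (1 - x 1 ^ 2)}

@[simp] lemma pillow_apply_zero (p : Circle × Circle) : pillow p 0 = (p.1 : ℂ).re := rfl
@[simp] lemma pillow_apply_one (p : Circle × Circle) : pillow p 1 = (p.2 : ℂ).re := rfl
@[simp] lemma pillow_apply_two (p : Circle × Circle) :
    pillow p 2 = (p.1 : ℂ).im * (p.2 : ℂ).im := rfl

lemma continuous_pillow : Continuous pillow := by
  unfold pillow; fun_prop

lemma pillow_inv (p : Circle × Circle) : pillow p⁻¹ = pillow p := by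
  ext i; fin_cases i <;> simp [pillow]

lemma eq_or_eq_inv_of_pillow_eq {p q : Circle × Circle} (h : pillow p = pillow q) :
    q = p ∨ q = p⁻¹ := by
  obtain ⟨z, w⟩ := p
  obtain ⟨z', w'⟩ := q
  have h₀ : (z' : ℂ).re = (z : ℂ).re := congrArg (· 0) h.symm
  have h₁ : (w' : ℂ).re = (w : ℂ).re := congrArg (· 1) h.symm
  have h₂ : (z' : ℂ).im * (w' : ℂ).im = (z : ℂ).im * (w : ℂ).im := congrArg (· 2) h.symm
  rcases Circle.eq_or_eq_inv_of_re_eq h₀ with hz | hz <;>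
    rcases Circle.eq_or_eq_inv_of_re_eq h₁ with hw | hw <;> rw [hz, hw] at h₂ ⊢
  · exact .inl rfl
  · have h₀ : (z : ℂ).im * (w : ℂ).im = 0 := by
      rw [Circle.im_inv, mul_neg] at h₂; linarith
    rcases mul_eq_zero.mp h₀ with hz | hw
    · exact .inr (by rw [Prod.inv_mk, Circle.inv_eq_self_of_im_eq_zero hz])
    · exact .inl (by rw [Circle.inv_eq_self_of_im_eq_zero hw])
  · have h₀ : (z : ℂ).im * (w : ℂ).im = 0 := by
      rw [Circle.im_inv, neg_mul] at h₂; linarith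
    rcases mul_eq_zero.mp h₀ with hz | hw
    · exact .inl (by rw [Circle.inv_eq_self_of_im_eq_zero hz])
    · exact .inr (by rw [Prod.inv_mk, Circle.inv_eq_self_of_im_eq_zero hw])
  · exact .inr rfl

lemma pillow_mem_pillowSurface (p : Circle × Circle) : pillow p ∈ pillowSurface := by
  have h₁ := Circle.re_sq_add_im_sq p.1
  have h₂ := Circle.re_sq_add_im_sq p.2
  refine ⟨?_, ?_, ?_⟩ <;> simp only [pillow_apply_zero, pillow_apply_one, pillow_apply_two] <;>
    nlinarith

lemma exists_pillow_eq {x : ℝ³} (hx : x ∈ pillowSurface) : ∃ p, pillow p = x := by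
  obtain ⟨hx₀, hx₁, hx₂⟩ := hx
  set s₀ := √(1 - x 0 ^ 2)
  set s₁ := √(1 - x 1 ^ 2)
  have hs₀ : s₀ ^ 2 = 1 - x 0 ^ 2 := Real.sq_sqrt (by linarith)
  have hs₁ : s₁ ^ 2 = 1 - x 1 ^ 2 := Real.sq_sqrt (by linarith)
  obtain ⟨z, hz_re, hz_im⟩ := Circle.exists_re_im (x := x 0) (y := s₀) (by linarith)
  have hsign : x 2 = s₀ * s₁ ∨ x 2 = s₀ * -s₁ := by
    rw [mul_neg, ← sq_eq_sq_iff_eq_or_eq_neg, mul_pow, hs₀, hs₁, hx₂]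
  obtain ⟨t, ht, hx₂'⟩ : ∃ t, t ^ 2 = s₁ ^ 2 ∧ x 2 = s₀ * t := by
    rcases hsign with h | h
    exacts [⟨s₁, rfl, h⟩, ⟨-s₁, neg_sq s₁, h⟩]
  obtain ⟨w, hw_re, hw_im⟩ := Circle.exists_re_im (x := x 1) (y := t) (by linarith)
  refine ⟨(z, w), ?_⟩
  ext i; fin_cases i
  exacts [hz_re, hw_re, by simp [hz_im, hw_im, hx₂']]

lemma ne_zero_of_mem_pillowSurface {x : ℝ³} (hx : x ∈ pillowSurface) : x ≠ 0 := by
  rintro rfl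
  simpa using hx.2.2

lemma eq_one_of_smul_mem_pillowSurface {x : ℝ³} (hx : x ∈ pillowSurface) {c : ℝ} (hc : 0 < c)
    (hcx : c • x ∈ pillowSurface) : c = 1 := by
  obtain ⟨hu, hv, hw⟩ := hx
  obtain ⟨hcu, hcv, hcw⟩ := hcx
  simp only [PiLp.smul_apply, smul_eq_mul, mul_pow] at hcu hcv hcw
  have key : (1 - c ^ 2) * (1 - c ^ 2 * x 0 ^ 2 * x 1 ^ 2) = 0 := by
    linear_combination c ^ 2 * hw - hcw
  rcases mul_eq_zero.mp key with h | h
  · nlinarith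
  · have hv₁ : x 1 ^ 2 = 1 := by nlinarith [sq_nonneg (x 1), sq_nonneg (c * x 0)]
    have hu₁ : x 0 ^ 2 = 1 := by nlinarith [sq_nonneg (x 0), sq_nonneg (c * x 1)]
    nlinarith

lemma exists_smul_mem_pillowSurface {x : ℝ³} (hx : ‖x‖ = 1) :
    ∃ c : ℝ, 0 < c ∧ c • x ∈ pillowSurface := by
  have hx' : x 0 ^ 2 + x 1 ^ 2 + x 2 ^ 2 = 1 := by
    have h := EuclideanSpace.norm_sq_eq x
    rw [hx, Fin.sum_univ_three] at h
    simpa using h.symm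
  obtain ⟨s, ⟨hs₁, hs₂⟩, hs⟩ : ∃ s ∈ Set.Icc (1 : ℝ) 2,
      (1 - s * x 0 ^ 2) * (1 - s * x 1 ^ 2) - s * x 2 ^ 2 = 0 := by
    refine intermediate_value_Icc' one_le_two (by fun_prop) ⟨?_, ?_⟩
    · nlinarith [sq_nonneg (x 0 ^ 2 - x 1 ^ 2)]
    · nlinarith [sq_nonneg (x 0 * x 1)]
  have hsq : √s ^ 2 = s := Real.sq_sqrt (by linarith)
  have hsum : s * x 0 ^ 2 + s * x 1 ^ 2 ≤ 2 := by nlinarith [sq_nonneg (x 2)]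
  have hprod : 0 ≤ (1 - s * x 0 ^ 2) * (1 - s * x 1 ^ 2) := by nlinarith [sq_nonneg (x 2)]
  refine ⟨√s, Real.sqrt_pos.mpr (by linarith), ?_, ?_, ?_⟩ <;>
    simp only [PiLp.smul_apply, smul_eq_mul, mul_pow, hsq]
  -- one negative factor of `hprod` would make both negative, contradicting `hsum`
  · by_contra! h
    nlinarith [nonpos_of_mul_nonneg_right hprod (by linarith : 1 - s * x 0 ^ 2 < 0)]
  · by_contra! h
    nlinarith [nonpos_of_mul_nonneg_left hprod (by linarith : 1 - s * x 1 ^ 2 < 0)]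
  · linarith

lemma injOn_normalize_pillowSurface : Set.InjOn (fun x : ℝ³ => ‖x‖⁻¹ • x) pillowSurface := by
  intro x hx y hy (h : ‖x‖⁻¹ • x = ‖y‖⁻¹ • y)
  have hx₀ : 0 < ‖x‖ := norm_pos_iff.mpr (ne_zero_of_mem_pillowSurface hx)
  have hy₀ : 0 < ‖y‖ := norm_pos_iff.mpr (ne_zero_of_mem_pillowSurface hy)
  have hyx : y = (‖y‖ / ‖x‖) • x := by
    rw [div_eq_mul_inv, mul_smul, h, smul_smul, mul_inv_cancel₀ hy₀.ne', one_smul]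
  have hc := eq_one_of_smul_mem_pillowSurface hx (div_pos hy₀ hx₀) (hyx ▸ hy)
  rw [hyx, hc, one_smul]

lemma exists_mem_pillowSurface_normalize_eq {q : ℝ³} (hq : ‖q‖ = 1) :
    ∃ x ∈ pillowSurface, ‖x‖⁻¹ • x = q := by
  obtain ⟨c, hc, hcq⟩ := exists_smul_mem_pillowSurface hq
  refine ⟨c • q, hcq, ?_⟩
  rw [norm_smul, hq, Real.norm_of_nonneg hc.le, mul_one, smul_smul, inv_mul_cancel₀ hc.ne',
    one_smul]

noncomputable def pillowSphere (p : Circle × Circle) : sphere (0 : ℝ³) 1 :=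
  ⟨‖pillow p‖⁻¹ • pillow p, by
    have hp := norm_ne_zero_iff.mpr (ne_zero_of_mem_pillowSurface (pillow_mem_pillowSurface p))
    rw [mem_sphere_zero_iff_norm, norm_smul, norm_inv, norm_norm, inv_mul_cancel₀ hp]⟩

lemma continuous_pillowSphere : Continuous pillowSphere := by
  have hp (p) : ‖pillow p‖ ≠ 0 :=
    norm_ne_zero_iff.mpr (ne_zero_of_mem_pillowSurface (pillow_mem_pillowSurface p))
  exact ((continuous_pillow.norm.inv₀ hp).smul continuous_pillow).subtype_mk _

lemma surjective_pillowSphere : Function.Surjective pillowSphere := by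
  intro q
  obtain ⟨x, hx, hxq⟩ := exists_mem_pillowSurface_normalize_eq (mem_sphere_zero_iff_norm.mp q.2)
  obtain ⟨p, rfl⟩ := exists_pillow_eq hx
  exact ⟨p, Subtype.ext hxq⟩

lemma pillowSphere_inv (p : Circle × Circle) : pillowSphere p⁻¹ = pillowSphere p := by
  simp only [pillowSphere, pillow_inv]

lemma eq_or_eq_inv_of_pillowSphere_eq {p q : Circle × Circle}
    (h : pillowSphere p = pillowSphere q) : q = p ∨ q = p⁻¹ :=
  eq_or_eq_inv_of_pillow_eq <| injOn_normalize_pillowSurface (pillow_mem_pillowSurface p)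
    (pillow_mem_pillowSurface q) (congrArg Subtype.val h)

end Pillowcase

noncomputable def Torus2.homeomorphCircleProd : Torus2 ≃ₜ Circle × Circle :=
  (AddCircle.homeomorphCircle one_ne_zero).prodCongr (AddCircle.homeomorphCircle one_ne_zero)

lemma Torus2.homeomorphCircleProd_neg (a : Torus2) :
    homeomorphCircleProd (-a) = (homeomorphCircleProd a)⁻¹ := by
  simp only [homeomorphCircleProd, Homeomorph.coe_prodCongr, Prod.map,
    AddCircle.homeomorphCircle_apply, AddCircle.toCircle_neg, Prod.inv_mk]

/-- `T²/σ ≅ S²` for the involution `σ(a) = -a`. -/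
theorem torus_quotient_neg_homeomorphic_S2 :
    Nonempty (Quot (fun a b : Torus2 => b = -a)
      ≃ₜ Metric.sphere (0 : EuclideanSpace ℝ (Fin 3)) 1) := by
  have : Fact ((0 : ℝ) < 1) := ⟨one_pos⟩
  let e := Torus2.homeomorphCircleProd
  refine ⟨(Pillowcase.continuous_pillowSphere.comp e.continuous).quotHomeomorph
    (Pillowcase.surjective_pillowSphere.comp e.surjective) ?_ ?_⟩
  · rintro a _ rfl
    simp only [Function.comp_apply, e, Torus2.homeomorphCircleProd_neg, Pillowcase.pillowSphere_inv]
  · intro a b h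
    rcases Pillowcase.eq_or_eq_inv_of_pillowSphere_eq h with h | h
    · obtain rfl := e.injective h
      exact .refl _
    · exact .rel a b (e.injective (h.trans (Torus2.homeomorphCircleProd_neg a).symm))
end

section
/- Let S⁴ = {(r,z₁,z₂) ∈ ℝ × ℂ² : r² + |z₁|² + |z₂|² = 1} and let σ be the involution σ(r,z₁,z₂) = (r, conj(z₁), conj(z₂)). Then the quotient space S⁴/σ (identifying each point with its σ-image) is homeomorphic to S⁴. -/
open Complex ComplexConjugate

/-- The unit sphere `S⁴ ⊂ ℝ × ℂ²`. -/
abbrev Sph4 : Type :=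
  {p : ℝ × ℂ × ℂ // p.1 ^ 2 + ‖p.2.1‖ ^ 2 + ‖p.2.2‖ ^ 2 = 1}

/-!
The coordinates `r, Re z₁, Re z₂` are `σ`-invariant, while `σ` negates `v = Im z₁ + i Im z₂ ∈ ℂ`.
The map `v ↦ v² / |v|` is continuous, norm-preserving, onto, and identifies exactly `v` with `-v`,
so `(r, z₁, z₂) ↦ (r, Re z₁, Re z₂, v² / |v|)` maps `S⁴` onto `S⁴ ⊂ ℝ⁵` with fibres the `σ`-orbits.
A continuous bijection from the compact quotient to a Hausdorff space is a homeomorphism.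
-/

noncomputable def Quot.homeomorphOfFibers {X Y : Type*} [TopologicalSpace X] [CompactSpace X]
    [TopologicalSpace Y] [T2Space Y] {r : X → X → Prop} (f : X → Y) (hf : Continuous f)
    (hsurj : Function.Surjective f) (hr : ∀ x y, r x y → f x = f y)
    (hfib : ∀ x y, f x = f y → Quot.mk r x = Quot.mk r y) : Quot r ≃ₜ Y :=
  have hinj : Function.Injective (Quot.lift f hr) := by
    rintro ⟨x⟩ ⟨y⟩ h
    exact hfib x y h
  (continuous_quot_lift hr hf).homeoOfEquivCompactToT2
    (f := Equiv.ofBijective _ ⟨hinj, Quot.surjective_lift hr |>.mpr hsurj⟩)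

namespace Complex

-- At `v = 0` the junk value `0 / 0 = 0` is the continuous extension.
noncomputable def sqDivNorm (v : ℂ) : ℂ := v ^ 2 / ‖v‖

@[simp]
lemma sqDivNorm_zero : sqDivNorm 0 = 0 := by simp [sqDivNorm]

@[simp]
lemma norm_sqDivNorm (v : ℂ) : ‖sqDivNorm v‖ = ‖v‖ := by
  rcases eq_or_ne v 0 with rfl | hv
  · simp
  · rw [sqDivNorm, norm_div, norm_pow, norm_real, norm_norm, sq, mul_div_cancel_right₀]
    exact norm_ne_zero_iff.mpr hv

@[simp]
lemma sqDivNorm_neg (v : ℂ) : sqDivNorm (-v) = sqDivNorm v := by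
  simp [sqDivNorm]

lemma sqDivNorm_mul_norm (v : ℂ) : sqDivNorm v * ‖v‖ = v ^ 2 := by
  rcases eq_or_ne v 0 with rfl | hv
  · simp
  · exact div_mul_cancel₀ _ (ofReal_ne_zero.mpr (norm_ne_zero_iff.mpr hv))

@[fun_prop]
lemma continuous_sqDivNorm : Continuous sqDivNorm := by
  refine continuous_iff_continuousAt.mpr fun v => ?_
  rcases eq_or_ne v 0 with rfl | hv
  · simpa [ContinuousAt] using
      squeeze_zero_norm (fun w => (norm_sqDivNorm w).le) tendsto_norm_zero
  · exact (continuousAt_id.pow 2).div (continuous_ofReal.comp continuous_norm).continuousAt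
      (ofReal_ne_zero.mpr (norm_ne_zero_iff.mpr hv))

lemma sqDivNorm_surjective : Function.Surjective sqDivNorm := by
  intro w
  obtain ⟨v, hv⟩ := IsAlgClosed.exists_pow_nat_eq ((‖w‖ : ℂ) * w) two_pos
  have hnorm : ‖v‖ = ‖w‖ := by
    have : ‖v‖ ^ 2 = ‖w‖ ^ 2 := by rw [← norm_pow, hv, norm_mul, norm_real, norm_norm, sq]
    exact (sq_eq_sq₀ (norm_nonneg v) (norm_nonneg w)).mp this
  refine ⟨v, ?_⟩
  rcases eq_or_ne w 0 with rfl | hw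
  · simp [norm_eq_zero.mp (hnorm.trans norm_zero)]
  · rw [sqDivNorm, hv, hnorm]
    exact mul_div_cancel_left₀ w (ofReal_ne_zero.mpr (norm_ne_zero_iff.mpr hw))

lemma sqDivNorm_eq_sqDivNorm_iff {v w : ℂ} : sqDivNorm v = sqDivNorm w ↔ v = w ∨ v = -w := by
  refine ⟨fun h => sq_eq_sq_iff_eq_or_eq_neg.mp ?_, ?_⟩
  · have hnorm : ‖v‖ = ‖w‖ := by rw [← norm_sqDivNorm, h, norm_sqDivNorm]
    rw [← sqDivNorm_mul_norm, ← sqDivNorm_mul_norm, h, hnorm]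
  · rintro (rfl | rfl) <;> simp

end Complex

noncomputable def imPair (p : ℝ × ℂ × ℂ) : ℂ := ⟨p.2.1.im, p.2.2.im⟩

@[simp] lemma imPair_re (p : ℝ × ℂ × ℂ) : (imPair p).re = p.2.1.im := rfl

@[simp] lemma imPair_im (p : ℝ × ℂ × ℂ) : (imPair p).im = p.2.2.im := rfl

@[fun_prop]
lemma continuous_imPair : Continuous imPair :=
  equivRealProdCLM.symm.continuous.comp
    (f := fun p : ℝ × ℂ × ℂ => (p.2.1.im, p.2.2.im)) (by fun_prop)

noncomputable def foldConj (p : ℝ × ℂ × ℂ) : EuclideanSpace ℝ (Fin 5) :=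
  !₂[p.1, p.2.1.re, p.2.2.re, (sqDivNorm (imPair p)).re, (sqDivNorm (imPair p)).im]

lemma continuous_foldConj : Continuous foldConj := by
  refine (PiLp.continuous_toLp 2 _).comp (continuous_pi fun i => ?_)
  fin_cases i <;> simp only <;> fun_prop

lemma norm_foldConj_sq (p : ℝ × ℂ × ℂ) :
    ‖foldConj p‖ ^ 2 = p.1 ^ 2 + ‖p.2.1‖ ^ 2 + ‖p.2.2‖ ^ 2 := by
  have h := norm_sqDivNorm (imPair p)
  rw [← sq_eq_sq₀ (norm_nonneg _) (norm_nonneg _)] at h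
  simp only [Complex.sq_norm, normSq_apply, imPair_re, imPair_im] at h ⊢
  rw [EuclideanSpace.norm_sq_eq, Fin.sum_univ_five]
  simp [foldConj]
  linear_combination h

lemma foldConj_conj (p : ℝ × ℂ × ℂ) :
    foldConj (p.1, conj p.2.1, conj p.2.2) = foldConj p := by
  have : imPair (p.1, conj p.2.1, conj p.2.2) = -imPair p := by apply Complex.ext <;> simp
  simp [foldConj, this]

lemma foldConj_surjective : Function.Surjective foldConj := by
  intro u
  obtain ⟨v, hv⟩ := sqDivNorm_surjective ⟨u 3, u 4⟩
  refine ⟨(u 0, ⟨u 1, v.re⟩, ⟨u 2, v.im⟩), ?_⟩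
  have : imPair (u 0, ⟨u 1, v.re⟩, ⟨u 2, v.im⟩) = v := rfl
  ext i
  fin_cases i <;> simp [foldConj, this, hv]

lemma eq_or_eq_conj_of_foldConj_eq {p q : ℝ × ℂ × ℂ} (h : foldConj p = foldConj q) :
    q = p ∨ q = (p.1, conj p.2.1, conj p.2.2) := by
  have hc (i : Fin 5) : foldConj q i = foldConj p i := by rw [h]
  have hsq : sqDivNorm (imPair q) = sqDivNorm (imPair p) := Complex.ext (hc 3) (hc 4)
  have hre : q.1 = p.1 ∧ q.2.1.re = p.2.1.re ∧ q.2.2.re = p.2.2.re := ⟨hc 0, hc 1, hc 2⟩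
  rcases sqDivNorm_eq_sqDivNorm_iff.mp hsq with him | him <;>
    simp only [Complex.ext_iff, imPair_re, imPair_im, neg_re, neg_im] at him
  · left
    simp [Prod.ext_iff, Complex.ext_iff, hre, him]
  · right
    simp [Prod.ext_iff, Complex.ext_iff, hre, him]

lemma isCompact_sph4 : IsCompact {p : ℝ × ℂ × ℂ | p.1 ^ 2 + ‖p.2.1‖ ^ 2 + ‖p.2.2‖ ^ 2 = 1} := by
  refine (isCompact_closedBall (0 : ℝ × ℂ × ℂ) 1).of_isClosed_subset
    (isClosed_eq (by fun_prop) continuous_const) fun p hp => ?_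
  have h₀ : |p.1| ≤ 1 := (sq_le_one_iff_abs_le_one _).mp (by nlinarith [hp.symm])
  have h₁ : ‖p.2.1‖ ≤ 1 := by
    simpa using (sq_le_one_iff_abs_le_one ‖p.2.1‖).mp (by nlinarith [hp.symm])
  have h₂ : ‖p.2.2‖ ≤ 1 := by
    simpa using (sq_le_one_iff_abs_le_one ‖p.2.2‖).mp (by nlinarith [hp.symm])
  simp [Prod.norm_def, h₀, h₁, h₂]

instance : CompactSpace Sph4 := isCompact_iff_compactSpace.mp isCompact_sph4

lemma mem_sphere_foldConj_iff (p : ℝ × ℂ × ℂ) :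
    foldConj p ∈ Metric.sphere (0 : EuclideanSpace ℝ (Fin 5)) 1 ↔
      p.1 ^ 2 + ‖p.2.1‖ ^ 2 + ‖p.2.2‖ ^ 2 = 1 := by
  rw [mem_sphere_zero_iff_norm, ← norm_foldConj_sq,
    pow_eq_one_iff_of_nonneg (norm_nonneg _) two_ne_zero]

noncomputable def Sph4.toSphere (p : Sph4) : Metric.sphere (0 : EuclideanSpace ℝ (Fin 5)) 1 :=
  ⟨foldConj p.1, (mem_sphere_foldConj_iff p.1).mpr p.2⟩

lemma Sph4.continuous_toSphere : Continuous Sph4.toSphere :=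
  (continuous_foldConj.comp continuous_subtype_val).subtype_mk _

lemma Sph4.toSphere_surjective : Function.Surjective Sph4.toSphere := by
  rintro ⟨u, hu⟩
  obtain ⟨p, rfl⟩ := foldConj_surjective u
  exact ⟨⟨p, (mem_sphere_foldConj_iff p).mp hu⟩, rfl⟩

/-- `S⁴/σ ≅ S⁴` for the involution `σ(r,z₁,z₂) = (r, conj z₁, conj z₂)`. -/
theorem S4_quotient_conj_homeomorphic_S4 :
    Nonempty (Quot (fun x y : Sph4 =>
        y.1 = (x.1.1, (starRingEnd ℂ) x.1.2.1, (starRingEnd ℂ) x.1.2.2))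
      ≃ₜ Metric.sphere (0 : EuclideanSpace ℝ (Fin 5)) 1) := by
  refine ⟨Quot.homeomorphOfFibers Sph4.toSphere Sph4.continuous_toSphere
    Sph4.toSphere_surjective (fun x y hxy => ?_) (fun x y hxy => ?_)⟩
  · exact Subtype.ext (by simp [Sph4.toSphere, hxy, foldConj_conj])
  · rcases eq_or_eq_conj_of_foldConj_eq (congrArg Subtype.val hxy) with hyx | hyx
    · rw [Subtype.ext hyx]
    · exact Quot.sound hyx
end

section
/- Let S³ = {s ∈ ℍ : |s| = 1} be the group of unit quaternions, acted on by T² via (t₁,t₂)·s = t₁·s·t₂, where t₁, t₂ are complex numbers of modulus 1 acting via the standard inclusion ℂ ⊂ ℍ. Then the orbit space S³/T² (the quotient by the equivalence s ~ t₁·s·t₂) is homeomorphic to the closed interval [0,1]. -/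
/-!
Write a quaternion as `s = z + w j` with `z w : ℂ`. Then `t₁ s t₂ = t₁ t₂ z + t₁ t̄₂ w j`, so `‖w‖`
is constant on orbits, and on `S³` it also fixes `‖z‖ = √(1 - ‖w‖²)`. Conversely the phases of `z`
and `w` can be moved independently, since `(t₁, t₂) ↦ (t₁ t₂, t₁ t̄₂)` maps `T²` onto `T²`. So the
orbits are the fibres of `s ↦ ‖w‖ ∈ [0, 1]`, a continuous surjection from a compact space onto a
Hausdorff one, hence a quotient map.
-/

/-- The standard inclusion ℂ ⊂ ℍ : `z = a + b·i ↦ a + b·i ∈ ℍ`. -/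
noncomputable def toQ (z : ℂ) : Quaternion ℝ := ⟨z.re, z.im, 0, 0⟩

/-- The group `S³` of unit quaternions. -/
abbrev S3 : Type := {s : Quaternion ℝ // ‖s‖ = 1}

/-- `s ~ t₁·s·t₂` for unit complex numbers `t₁, t₂`. -/
def rel14 (x y : S3) : Prop :=
  ∃ t₁ t₂ : ℂ, ‖t₁‖ = 1 ∧ ‖t₂‖ = 1 ∧ y.1 = toQ t₁ * x.1 * toQ t₂

open Complex (I arg)

lemma Complex.exists_circle_mul_eq {z z' : ℂ} (h : ‖z‖ = ‖z'‖) : ∃ u : Circle, u * z = z' := by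
  refine ⟨Circle.exp (arg z' - arg z), ?_⟩
  calc Circle.exp (arg z' - arg z) * z
      = Complex.exp ((arg z' - arg z : ℝ) * I) * (‖z‖ * Complex.exp (arg z * I)) := by
        rw [Circle.coe_exp, norm_mul_exp_arg_mul_I]
    _ = ‖z'‖ * Complex.exp (arg z' * I) := by
        rw [h, mul_left_comm, ← Complex.exp_add]; push_cast; ring_nf
    _ = z' := norm_mul_exp_arg_mul_I z'

lemma Circle.exists_mul_eq_and_mul_inv_eq (u v : Circle) :
    ∃ t₁ t₂ : Circle, t₁ * t₂ = u ∧ t₁ * t₂⁻¹ = v := by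
  refine ⟨exp ((arg u + arg v) / 2), exp ((arg u - arg v) / 2), ?_, ?_⟩
  · rw [← exp_add]; convert exp_arg u using 2; ring
  · rw [← exp_neg, ← exp_add]; convert exp_arg v using 2; ring

namespace Quaternion

/-- Writing `s = z + w j` with `z w : ℂ`, `s.complexPart = z` and `s.jPart = w`. -/
def complexPart (s : Quaternion ℝ) : ℂ := ⟨s.re, s.imI⟩

def jPart (s : Quaternion ℝ) : ℂ := ⟨s.imJ, s.imK⟩

lemma ext_complexPart_jPart {s s' : Quaternion ℝ}
    (hc : s.complexPart = s'.complexPart) (hj : s.jPart = s'.jPart) : s = s' := by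
  rw [Complex.ext_iff] at hc hj
  ext
  exacts [hc.1, hc.2, hj.1, hj.2]

lemma norm_sq_eq_norm_complexPart_sq_add (s : Quaternion ℝ) :
    ‖s‖ ^ 2 = ‖s.complexPart‖ ^ 2 + ‖s.jPart‖ ^ 2 := by
  rw [sq, ← normSq_eq_norm_mul_self, normSq_def']
  simp only [Complex.sq_norm, Complex.normSq_mk, complexPart, jPart]
  ring

lemma continuous_jPart : Continuous jPart :=
  Complex.equivRealProdCLM.symm.continuous.comp (continuous_imJ.prodMk continuous_imK)

lemma complexPart_toQ_mul_mul_toQ (a b : ℂ) (s : Quaternion ℝ) :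
    (toQ a * s * toQ b).complexPart = a * b * s.complexPart := by
  apply Complex.ext <;>
    simp only [complexPart, re_mul, imI_mul, Complex.mul_re, Complex.mul_im] <;>
    simp only [toQ] <;> ring

lemma jPart_toQ_mul_mul_toQ (a b : ℂ) (s : Quaternion ℝ) :
    (toQ a * s * toQ b).jPart = a * starRingEnd ℂ b * s.jPart := by
  apply Complex.ext <;>
    simp only [jPart, imJ_mul, imK_mul, Complex.mul_re, Complex.mul_im, Complex.conj_re,
      Complex.conj_im] <;>
    simp only [toQ] <;> ring

lemma exists_circle_toQ_mul_mul_toQ_eq {s s' : Quaternion ℝ}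
    (hc : ‖s.complexPart‖ = ‖s'.complexPart‖) (hj : ‖s.jPart‖ = ‖s'.jPart‖) :
    ∃ t₁ t₂ : Circle, toQ t₁ * s * toQ t₂ = s' := by
  obtain ⟨u, hu⟩ := Complex.exists_circle_mul_eq hc
  obtain ⟨v, hv⟩ := Complex.exists_circle_mul_eq hj
  obtain ⟨t₁, t₂, rfl, rfl⟩ := Circle.exists_mul_eq_and_mul_inv_eq u v
  refine ⟨t₁, t₂, ext_complexPart_jPart ?_ ?_⟩
  · rw [complexPart_toQ_mul_mul_toQ, ← hu, Circle.coe_mul]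
  · rw [jPart_toQ_mul_mul_toQ, ← hv, Circle.coe_mul, Circle.coe_inv_eq_conj]

end Quaternion

open Quaternion

instance : CompactSpace S3 :=
  (isCompact_iff_compactSpace (s := {s : Quaternion ℝ | ‖s‖ = 1})).mp <| by
    convert isCompact_sphere (0 : Quaternion ℝ) 1 using 1
    ext
    simp

lemma S3.norm_complexPart_sq_add (s : S3) : ‖s.1.complexPart‖ ^ 2 + ‖s.1.jPart‖ ^ 2 = 1 := by
  rw [← norm_sq_eq_norm_complexPart_sq_add, s.2, one_pow]

lemma rel14_iff (x y : S3) : rel14 x y ↔ ‖x.1.jPart‖ = ‖y.1.jPart‖ := by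
  constructor
  · rintro ⟨t₁, t₂, h₁, h₂, hy⟩
    rw [hy, jPart_toQ_mul_mul_toQ, norm_mul, norm_mul, Complex.norm_conj, h₁, h₂, one_mul, one_mul]
  · intro hj
    have hc : ‖x.1.complexPart‖ = ‖y.1.complexPart‖ := by
      have := (S3.norm_complexPart_sq_add x).trans (S3.norm_complexPart_sq_add y).symm
      rw [hj, add_left_inj] at this
      exact (pow_left_inj₀ (norm_nonneg _) (norm_nonneg _) two_ne_zero).mp this
    obtain ⟨t₁, t₂, hy⟩ := exists_circle_toQ_mul_mul_toQ_eq hc hj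
    exact ⟨t₁, t₂, Circle.norm_coe t₁, Circle.norm_coe t₂, hy.symm⟩

noncomputable def S3.normJPart : C(S3, Set.Icc (0 : ℝ) 1) where
  toFun s := ⟨‖s.1.jPart‖, norm_nonneg _, (sq_le_one_iff₀ (norm_nonneg _)).mp <| by
    nlinarith [S3.norm_complexPart_sq_add s, sq_nonneg ‖s.1.complexPart‖]⟩
  continuous_toFun := ((continuous_jPart.comp continuous_subtype_val).norm).subtype_mk _

lemma S3.surjective_normJPart : Function.Surjective S3.normJPart := by
  rintro ⟨r, hr₀, hr₁⟩
  let s : Quaternion ℝ := ⟨√(1 - r ^ 2), 0, r, 0⟩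
  have hs : ‖s‖ = 1 := by
    refine (pow_eq_one_iff_of_nonneg (norm_nonneg _) two_ne_zero).mp ?_
    have : 0 ≤ 1 - r ^ 2 := by nlinarith
    rw [norm_sq_eq_norm_complexPart_sq_add]
    simp only [s, complexPart, jPart, Complex.sq_norm, Complex.normSq_mk, Real.mul_self_sqrt this]
    ring
  refine ⟨⟨s, hs⟩, Subtype.ext ?_⟩
  show ‖(⟨r, 0⟩ : ℂ)‖ = r
  rw [← Complex.ofReal_def, Complex.norm_real, Real.norm_of_nonneg hr₀]

/-- The orbit space `S³/T²` of the action `(t₁,t₂)·s = t₁ s t₂` is a closed interval. -/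
theorem S3_quotient_T2_homeomorphic_interval :
    Nonempty (Quot rel14 ≃ₜ (Set.Icc (0 : ℝ) 1)) := by
  have hker : ∀ x y, rel14 x y ↔ Setoid.ker S3.normJPart x y := fun x y ↦ by
    rw [rel14_iff, Setoid.ker_def, ← Subtype.coe_inj]
    rfl
  exact ⟨(Homeomorph.Quot.congrRight hker).trans
    (Topology.IsQuotientMap.of_surjective_continuous S3.surjective_normJPart
      S3.normJPart.continuous).homeomorph⟩
end

section
/- Let S³ = {s ∈ ℍ : |s| = 1} be the group of unit quaternions, and consider the action of T³ on S³ × S³ given by (t₁,t₂,t₃)·(s₁,s₂) = (t₁·s₁·t₂⁻¹, t₂·s₂·t₃), where t₁,t₂,t₃ are complex numbers of modulus 1 acting via the standard inclusion ℂ ⊂ ℍ. Then the orbit space (S³ × S³)/T³ is homeomorphic to S³. -/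
/-- `(s₁,s₂) ~ (t₁ s₁ t₂⁻¹, t₂ s₂ t₃)` for unit complex numbers `t₁,t₂,t₃`. -/
def rel16 (x y : S3 × S3) : Prop :=
  ∃ t₁ t₂ t₃ : ℂ, ‖t₁‖ = 1 ∧ ‖t₂‖ = 1 ∧ ‖t₃‖ = 1 ∧
    y.1.1 = toQ t₁ * x.1.1 * (toQ t₂)⁻¹ ∧ y.2.1 = toQ t₂ * x.2.1 * toQ t₃

/-!
Write a unit quaternion as `s = z + w j` with `z w : ℂ`. A unit complex number `t` acts by
`t s = t z + t w j` and `s t = z t + w t̄ j`, so the torus rotates the four coordinates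
`z₁, w₁, z₂, w₂` of `(s₁, s₂)` by the phases `t₁ t̄₂, t₁ t₂, t₂ t₃, t₂ t̄₃`. Hence the heights
`A = |z₁|² - |w₁|²`, `B = |z₂|² - |w₂|²` and `C = 4 z₁ w̄₁ z₂ w₂` are complete invariants of the
orbits, and they take exactly the values with `A², B² ≤ 1` and `|C|² = (1 - A²)(1 - B²)`.
The map `(a, b) ↦ (a √(1 - b²/2), b √(1 - a²/2))` sends the square `[-1, 1]²` bijectively onto the
unit disc with `1 - x² - y² = (1 - a²)(1 - b²)`, so `(A, B, C) ↦ (x, y, Re C, Im C)` identifies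
this set of invariants with `S³`. A continuous bijection from the compact orbit space onto the
Hausdorff sphere is a homeomorphism.
-/

open scoped Quaternion ComplexConjugate

theorem Quot.nonempty_homeomorph_of_fibers {α β : Type*} [TopologicalSpace α] [CompactSpace α]
    [TopologicalSpace β] [T2Space β] {r : α → α → Prop} {f : α → β} (hf : Continuous f)
    (hsurj : Function.Surjective f) (hfib : ∀ x y, r x y ↔ f x = f y) :
    Nonempty (Quot r ≃ₜ β) := by
  let g : Quot r → β := Quot.lift f fun x y h => (hfib x y).1 h
  have hinj : Function.Injective g := by
    rintro ⟨x⟩ ⟨y⟩ h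
    exact Quot.sound ((hfib x y).2 h)
  exact ⟨(continuous_quot_lift _ hf).homeoOfEquivCompactToT2
    (f := Equiv.ofBijective g ⟨hinj, (Quot.surjective_lift _).2 hsurj⟩)⟩

namespace Complex

theorem exists_norm_eq_one_mul_eq_s16 {z z' : ℂ} (h : normSq z' = normSq z) :
    ∃ u : ℂ, ‖u‖ = 1 ∧ z' = u * z := by
  have hnorm : ‖z'‖ = ‖z‖ := by
    rwa [normSq_eq_norm_sq, normSq_eq_norm_sq, sq_eq_sq₀ (norm_nonneg _) (norm_nonneg _)] at h
  refine ⟨exp ((arg z' - arg z : ℝ) * I), norm_exp_ofReal_mul_I _, ?_⟩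
  calc z' = ‖z‖ * exp (arg z' * I) := by rw [← hnorm, norm_mul_exp_arg_mul_I]
    _ = exp ((arg z' - arg z : ℝ) * I) * (‖z‖ * exp (arg z * I)) := by
      rw [mul_left_comm, ← exp_add]; push_cast; ring_nf
    _ = exp ((arg z' - arg z : ℝ) * I) * z := by rw [norm_mul_exp_arg_mul_I]

theorem exists_mul_eq_of_normSq_eq_mul {p q : ℝ} (hp : 0 ≤ p) (hq : 0 ≤ q) {c : ℂ}
    (hc : normSq c = p * q) : ∃ z w : ℂ, normSq z = p ∧ normSq w = q ∧ z * w = c := by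
  refine ⟨√p * exp (arg c * I), √q, ?_, ?_, ?_⟩
  · rw [map_mul, normSq_ofReal, normSq_eq_norm_sq (exp _), norm_exp_ofReal_mul_I,
      Real.mul_self_sqrt hp, one_pow, mul_one]
  · rw [normSq_ofReal, Real.mul_self_sqrt hq]
  · have hc' : ‖c‖ = √p * √q := by
      rw [← Real.sqrt_mul hp, ← hc, normSq_eq_norm_sq, Real.sqrt_sq (norm_nonneg c)]
    calc (√p : ℂ) * exp (arg c * I) * √q = ((√p * √q : ℝ) : ℂ) * exp (arg c * I) := by
          push_cast; ring
      _ = c := by rw [← hc', norm_mul_exp_arg_mul_I]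

theorem exists_norm_eq_one_mul_self_eq {s : ℂ} (hs : ‖s‖ = 1) :
    ∃ t : ℂ, ‖t‖ = 1 ∧ t * t = s := by
  obtain ⟨t, ht⟩ := IsAlgClosed.exists_pow_nat_eq s two_pos
  refine ⟨t, ?_, by rw [← sq, ht]⟩
  rwa [← pow_left_inj₀ (norm_nonneg t) zero_le_one two_ne_zero, one_pow, ← norm_pow, ht]

end Complex

section Torus

open Complex

theorem exists_torus_of_mul_eq {a b d e : ℂ} (ha : ‖a‖ = 1) (hd : ‖d‖ = 1) (he : ‖e‖ = 1)
    (h : b = a * d * e) :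
    ∃ t₁ t₂ t₃ : ℂ, ‖t₁‖ = 1 ∧ ‖t₂‖ = 1 ∧ ‖t₃‖ = 1 ∧
      a = t₁ * t₂⁻¹ ∧ b = t₁ * t₂ ∧ d = t₂ * t₃ ∧ e = t₂ * t₃⁻¹ := by
  obtain ⟨t, ht, htt⟩ := exists_norm_eq_one_mul_self_eq (s := d * e) (by simp [hd, he])
  have ht0 : t ≠ 0 := norm_ne_zero_iff.1 (by simp [ht])
  have hd0 : d ≠ 0 := norm_ne_zero_iff.1 (by simp [hd])
  refine ⟨a * t, t, t⁻¹ * d, by simp [ha, ht], ht, by simp [ht, hd], ?_, ?_, ?_, ?_⟩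
  · field_simp
  · rw [h, mul_assoc, mul_assoc, ← htt]
  · field_simp
  · rw [mul_inv, inv_inv, ← mul_assoc, htt]
    field_simp

theorem exists_phases_of_normSq_eq {z₁ w₁ z₂ w₂ z₁' w₁' z₂' w₂' : ℂ}
    (h₁ : normSq z₁' = normSq z₁) (h₂ : normSq w₁' = normSq w₁)
    (h₃ : normSq z₂' = normSq z₂) (h₄ : normSq w₂' = normSq w₂)
    (hc : z₁' * conj w₁' * z₂' * w₂' = z₁ * conj w₁ * z₂ * w₂) :
    ∃ a b d e : ℂ, ‖a‖ = 1 ∧ ‖d‖ = 1 ∧ ‖e‖ = 1 ∧ b = a * d * e ∧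
      z₁' = a * z₁ ∧ w₁' = b * w₁ ∧ z₂' = d * z₂ ∧ w₂' = e * w₂ := by
  obtain ⟨a, ha, rfl⟩ := exists_norm_eq_one_mul_eq_s16 h₁
  obtain ⟨b, hb, rfl⟩ := exists_norm_eq_one_mul_eq_s16 h₂
  obtain ⟨d, hd, rfl⟩ := exists_norm_eq_one_mul_eq_s16 h₃
  obtain ⟨e, he, rfl⟩ := exists_norm_eq_one_mul_eq_s16 h₄
  have h0 (u : ℂ) (hu : ‖u‖ = 1) : u ≠ 0 := norm_ne_zero_iff.1 (by simp [hu])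
  -- a vanishing coordinate leaves its phase free, so that phase can absorb the constraint
  by_cases hz₁ : z₁ = 0
  · refine ⟨b * (d * e)⁻¹, b, d, e, by simp [hb, hd, he], hd, he, ?_, by simp [hz₁], rfl, rfl, rfl⟩
    field_simp [h0 d hd, h0 e he]
  by_cases hw₁ : w₁ = 0
  · exact ⟨a, a * d * e, d, e, ha, hd, he, rfl, rfl, by simp [hw₁], rfl, rfl⟩
  by_cases hz₂ : z₂ = 0
  · refine ⟨a, b, b * (a * e)⁻¹, e, ha, by simp [ha, hb, he], he, ?_, rfl, rfl, by simp [hz₂], rfl⟩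
    field_simp [h0 a ha, h0 e he]
  by_cases hw₂ : w₂ = 0
  · refine ⟨a, b, d, b * (a * d)⁻¹, ha, hd, by simp [ha, hb, hd], ?_, rfl, rfl, rfl, by simp [hw₂]⟩
    field_simp [h0 a ha, h0 d hd]
  refine ⟨a, b, d, e, ha, hd, he, ?_, rfl, rfl, rfl, rfl⟩
  have hphase : a * conj b * d * e = 1 := by
    refine mul_right_cancel₀ (b := z₁ * conj w₁ * z₂ * w₂) (by simp [*]) ?_
    simp only [map_mul] at hc
    linear_combination hc
  have hbb : b * conj b = 1 := by rw [mul_conj, normSq_eq_norm_sq, hb]; norm_num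
  linear_combination (-b) * hphase + (a * d * e) * hbb

end Torus

theorem eq_of_mul_two_sub_eq {P Q P' Q' : ℝ} (hP : P ≤ 1) (hQ : Q ≤ 1)
    (hP' : P' ≤ 1) (hQ' : Q' ≤ 1)
    (h₁ : P * (2 - Q) = P' * (2 - Q')) (h₂ : Q * (2 - P) = Q' * (2 - P')) :
    P = P' ∧ Q = Q' := by
  have hd : P' - P = Q' - Q := by linarith
  have hprod : (P' - P) * (2 - P - Q') = 0 := by linear_combination (-1) * h₁ - P * hd
  rcases mul_eq_zero.1 hprod with h | h <;> constructor <;> linarith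

theorem exists_mul_two_sub_eq {x y : ℝ} (hxy : x ^ 2 + y ^ 2 ≤ 1) :
    ∃ P Q : ℝ, (0 ≤ P ∧ P ≤ 1) ∧ (0 ≤ Q ∧ Q ≤ 1) ∧
      P * (2 - Q) = 2 * x ^ 2 ∧ Q * (2 - P) = 2 * y ^ 2 := by
  have hD0 : 0 ≤ 4 * (1 - x ^ 2 - y ^ 2) + (x ^ 2 - y ^ 2) ^ 2 := by nlinarith
  -- `P` and `2 - Q` are the roots of `X² - (2 + x² - y²) X + 2 x²`
  set D := 4 * (1 - x ^ 2 - y ^ 2) + (x ^ 2 - y ^ 2) ^ 2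
  set δ := x ^ 2 - y ^ 2
  have hD : √D ^ 2 = D := Real.sq_sqrt hD0
  have hδ : |δ| ≤ √D := Real.abs_le_sqrt (by nlinarith)
  have hδxy : |δ| ≤ x ^ 2 + y ^ 2 := abs_le.2 ⟨by nlinarith, by nlinarith⟩
  have hD2 : √D ≤ 2 - |δ| := by
    rw [Real.sqrt_le_iff]
    constructor <;> nlinarith [sq_abs δ]
  have h₁ := le_abs_self δ
  have h₂ := neg_abs_le δ
  refine ⟨(2 + δ - √D) / 2, (2 - δ - √D) / 2, ⟨by linarith, by linarith⟩,
    ⟨by linarith, by linarith⟩, ?_, ?_⟩ <;> linear_combination (-1 / 4 : ℝ) * hD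

noncomputable def squareToDisk (a b : ℝ) : ℝ × ℝ := (a * √(1 - b ^ 2 / 2), b * √(1 - a ^ 2 / 2))

theorem sq_squareToDisk_add {a b : ℝ} (ha : a ^ 2 ≤ 2) (hb : b ^ 2 ≤ 2) :
    (squareToDisk a b).1 ^ 2 + (squareToDisk a b).2 ^ 2 = 1 - (1 - a ^ 2) * (1 - b ^ 2) := by
  simp only [squareToDisk, mul_pow, Real.sq_sqrt (by linarith : 0 ≤ 1 - b ^ 2 / 2),
    Real.sq_sqrt (by linarith : 0 ≤ 1 - a ^ 2 / 2)]
  ring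

theorem squareToDisk_inj {a b a' b' : ℝ} (ha : a ^ 2 ≤ 1) (hb : b ^ 2 ≤ 1) (ha' : a' ^ 2 ≤ 1)
    (hb' : b' ^ 2 ≤ 1) (h : squareToDisk a b = squareToDisk a' b') : a = a' ∧ b = b' := by
  simp only [squareToDisk, Prod.mk.injEq] at h
  have hsq (u v : ℝ) (hv : v ^ 2 ≤ 1) : (u * √(1 - v ^ 2 / 2)) ^ 2 * 2 = u ^ 2 * (2 - v ^ 2) := by
    rw [mul_pow, Real.sq_sqrt (by linarith)]; ring
  obtain ⟨hab, hbb⟩ := eq_of_mul_two_sub_eq ha hb ha' hb'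
    (by rw [← hsq a b hb, ← hsq a' b' hb', h.1]) (by rw [← hsq b a ha, ← hsq b' a' ha', h.2])
  rw [hab, hbb] at h
  exact ⟨mul_right_cancel₀ (Real.sqrt_pos.2 (by linarith)).ne' h.1,
    mul_right_cancel₀ (Real.sqrt_pos.2 (by linarith)).ne' h.2⟩

theorem exists_squareToDisk_eq {x y : ℝ} (hxy : x ^ 2 + y ^ 2 ≤ 1) :
    ∃ a b : ℝ, a ^ 2 ≤ 1 ∧ b ^ 2 ≤ 1 ∧ squareToDisk a b = (x, y) := by
  obtain ⟨P, Q, hP, hQ, hx, hy⟩ := exists_mul_two_sub_eq hxy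
  have hP2 : 0 < √(1 - P / 2) := Real.sqrt_pos.2 (by linarith)
  have hQ2 : 0 < √(1 - Q / 2) := Real.sqrt_pos.2 (by linarith)
  have ha : (x / √(1 - Q / 2)) ^ 2 = P := by
    rw [div_pow, Real.sq_sqrt (by linarith), div_eq_iff (by linarith)]; linarith
  have hb : (y / √(1 - P / 2)) ^ 2 = Q := by
    rw [div_pow, Real.sq_sqrt (by linarith), div_eq_iff (by linarith)]; linarith
  refine ⟨x / √(1 - Q / 2), y / √(1 - P / 2), ha.trans_le hP.2, hb.trans_le hQ.2, ?_⟩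
  rw [squareToDisk, ha, hb, div_mul_cancel₀ _ hQ2.ne', div_mul_cancel₀ _ hP2.ne']

namespace Quaternion

-- `q = zCoord q + wCoord q * j`
def zCoord (q : ℍ) : ℂ := ⟨q.re, q.imI⟩

def wCoord (q : ℍ) : ℂ := ⟨q.imJ, q.imK⟩

def ofCoords (z w : ℂ) : ℍ := ⟨z.re, z.im, w.re, w.im⟩

@[simp] theorem zCoord_ofCoords (z w : ℂ) : zCoord (ofCoords z w) = z := rfl

@[simp] theorem wCoord_ofCoords (z w : ℂ) : wCoord (ofCoords z w) = w := rfl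

theorem ext_coords {p q : ℍ} (hz : zCoord p = zCoord q) (hw : wCoord p = wCoord q) : p = q := by
  rw [Complex.ext_iff] at hz hw
  ext <;> tauto

theorem zCoord_coe_mul_mul_coe (a b : ℂ) (q : ℍ) : zCoord (a * q * b) = a * zCoord q * b := by
  apply Complex.ext <;> simp [zCoord]

theorem wCoord_coe_mul_mul_coe (a b : ℂ) (q : ℍ) :
    wCoord (a * q * b) = a * wCoord q * conj b := by
  apply Complex.ext <;> simp [wCoord]

theorem eq_coe_mul_mul_coe_iff {p q : ℍ} {a b : ℂ} :
    p = a * q * b ↔ zCoord p = a * zCoord q * b ∧ wCoord p = a * wCoord q * conj b := by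
  refine ⟨?_, fun ⟨hz, hw⟩ => ext_coords ?_ ?_⟩
  · rintro rfl
    exact ⟨zCoord_coe_mul_mul_coe a b q, wCoord_coe_mul_mul_coe a b q⟩
  · rw [hz, zCoord_coe_mul_mul_coe]
  · rw [hw, wCoord_coe_mul_mul_coe]

theorem normSq_eq_coords (q : ℍ) :
    normSq q = Complex.normSq (zCoord q) + Complex.normSq (wCoord q) := by
  simp only [normSq_def', zCoord, Complex.normSq_apply, wCoord]; ring

theorem norm_eq_one_iff_coords {q : ℍ} :
    ‖q‖ = 1 ↔ Complex.normSq (zCoord q) + Complex.normSq (wCoord q) = 1 := by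
  rw [← normSq_eq_coords, normSq_eq_norm_mul_self, ← sq,
    pow_eq_one_iff_of_nonneg (norm_nonneg q) two_ne_zero]

@[fun_prop]
theorem continuous_zCoord : Continuous zCoord :=
  Complex.equivRealProdCLM.symm.continuous.comp (continuous_re.prodMk continuous_imI)

@[fun_prop]
theorem continuous_wCoord : Continuous wCoord :=
  Complex.equivRealProdCLM.symm.continuous.comp (continuous_imJ.prodMk continuous_imK)

end Quaternion

open Complex
open Quaternion (zCoord wCoord ofCoords zCoord_ofCoords wCoord_ofCoords
  norm_eq_one_iff_coords continuous_zCoord continuous_wCoord)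

instance inst_s16 : CompactSpace S3 :=
  (isCompact_iff_compactSpace (s := {s : ℍ | ‖s‖ = 1})).1 <| by
    simpa [Metric.sphere, dist_eq_norm] using isCompact_sphere (0 : ℍ) 1

theorem S3.normSq_coords (s : S3) : normSq (zCoord s.1) + normSq (wCoord s.1) = 1 :=
  norm_eq_one_iff_coords.1 s.2

theorem rel16_iff_coords {x y : S3 × S3} : rel16 x y ↔
    ∃ t₁ t₂ t₃ : ℂ, ‖t₁‖ = 1 ∧ ‖t₂‖ = 1 ∧ ‖t₃‖ = 1 ∧
      zCoord y.1.1 = t₁ * zCoord x.1.1 * t₂⁻¹ ∧ wCoord y.1.1 = t₁ * wCoord x.1.1 * t₂ ∧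
      zCoord y.2.1 = t₂ * zCoord x.2.1 * t₃ ∧ wCoord y.2.1 = t₂ * wCoord x.2.1 * t₃⁻¹ := by
  have htoQ_inv (t : ℂ) : (toQ t)⁻¹ = toQ t⁻¹ := (map_inv₀ Quaternion.ofComplex t).symm
  refine exists₃_congr fun t₁ t₂ t₃ => and_congr_right fun _ => and_congr_right fun h₂ =>
    and_congr_right fun h₃ => ?_
  rw [htoQ_inv, show toQ = Quaternion.coeComplex from rfl, Quaternion.eq_coe_mul_mul_coe_iff,
    Quaternion.eq_coe_mul_mul_coe_iff, map_inv₀, ← inv_eq_conj h₂, inv_inv, ← inv_eq_conj h₃,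
    and_assoc]

noncomputable def hopfHeight (q : ℍ) : ℝ := normSq (zCoord q) - normSq (wCoord q)

noncomputable def orbitInvariants (x : S3 × S3) : ℝ × ℝ × ℂ :=
  (hopfHeight x.1.1, hopfHeight x.2.1,
    4 * (zCoord x.1.1 * conj (wCoord x.1.1) * zCoord x.2.1 * wCoord x.2.1))

def invariantSet : Set (ℝ × ℝ × ℂ) :=
  {p | p.1 ^ 2 ≤ 1 ∧ p.2.1 ^ 2 ≤ 1 ∧ normSq p.2.2 = (1 - p.1 ^ 2) * (1 - p.2.1 ^ 2)}

theorem continuous_orbitInvariants : Continuous orbitInvariants := by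
  unfold orbitInvariants hopfHeight
  fun_prop

theorem S3.one_sub_hopfHeight_sq (s : S3) :
    1 - hopfHeight s.1 ^ 2 = 4 * normSq (zCoord s.1) * normSq (wCoord s.1) := by
  rw [hopfHeight]
  linear_combination (-(1 + normSq (zCoord s.1) + normSq (wCoord s.1))) * s.normSq_coords

theorem orbitInvariants_eq_of_rel16 {x y : S3 × S3} (h : rel16 x y) :
    orbitInvariants y = orbitInvariants x := by
  obtain ⟨t₁, t₂, t₃, h₁, h₂, h₃, hz₁, hw₁, hz₂, hw₂⟩ := rel16_iff_coords.1 h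
  have hn (t : ℂ) (ht : ‖t‖ = 1) : normSq t = 1 := by rw [normSq_eq_norm_sq, ht, one_pow]
  have h0 (t : ℂ) (ht : ‖t‖ = 1) : t ≠ 0 := norm_ne_zero_iff.1 (by simp [ht])
  simp only [orbitInvariants, hopfHeight, hz₁, hw₁, hz₂, hw₂, map_mul, map_inv₀, hn t₁ h₁,
    hn t₂ h₂, hn t₃ h₃, ← inv_eq_conj h₁, ← inv_eq_conj h₂, inv_one, one_mul, mul_one]
  field_simp [h0 t₁ h₁, h0 t₂ h₂, h0 t₃ h₃]

theorem rel16_of_orbitInvariants_eq {x y : S3 × S3} (h : orbitInvariants x = orbitInvariants y) :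
    rel16 x y := by
  simp only [orbitInvariants, hopfHeight, Prod.mk.injEq,
    mul_right_inj' (by norm_num : (4 : ℂ) ≠ 0)] at h
  obtain ⟨hA, hB, hC⟩ := h
  have hx₁ := x.1.normSq_coords
  have hx₂ := x.2.normSq_coords
  have hy₁ := y.1.normSq_coords
  have hy₂ := y.2.normSq_coords
  obtain ⟨a, b, d, e, ha, hd, he, hb, hz₁, hw₁, hz₂, hw₂⟩ := exists_phases_of_normSq_eq
    (by linarith) (by linarith) (by linarith) (by linarith) hC.symm
  obtain ⟨t₁, t₂, t₃, h₁, h₂, h₃, rfl, rfl, rfl, rfl⟩ := exists_torus_of_mul_eq ha hd he hb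
  refine rel16_iff_coords.2 ⟨t₁, t₂, t₃, h₁, h₂, h₃, ?_, ?_, ?_, ?_⟩
  · rw [hz₁]; ring
  · rw [hw₁]; ring
  · rw [hz₂]; ring
  · rw [hw₂]; ring

theorem rel16_iff_orbitInvariants_eq {x y : S3 × S3} :
    rel16 x y ↔ orbitInvariants x = orbitInvariants y :=
  ⟨fun h => (orbitInvariants_eq_of_rel16 h).symm, rel16_of_orbitInvariants_eq⟩

theorem orbitInvariants_mem (x : S3 × S3) : orbitInvariants x ∈ invariantSet := by
  have h₁ := x.1.one_sub_hopfHeight_sq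
  have h₂ := x.2.one_sub_hopfHeight_sq
  simp only [invariantSet, orbitInvariants, Set.mem_ofPred_eq]
  refine ⟨?_, ?_, ?_⟩
  · nlinarith [mul_nonneg (normSq_nonneg (zCoord x.1.1)) (normSq_nonneg (wCoord x.1.1))]
  · nlinarith [mul_nonneg (normSq_nonneg (zCoord x.2.1)) (normSq_nonneg (wCoord x.2.1))]
  · simp only [map_mul, normSq_conj, h₁, h₂]
    rw [normSq_ofNat]; ring

theorem exists_orbitInvariants_eq {p : ℝ × ℝ × ℂ} (hp : p ∈ invariantSet) :
    ∃ x : S3 × S3, orbitInvariants x = p := by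
  obtain ⟨a, b, c⟩ := p
  obtain ⟨ha, hb, hc⟩ := hp
  obtain ⟨Z, W, hZ, hW, hZW⟩ := exists_mul_eq_of_normSq_eq_mul (p := (1 - a ^ 2) / 4)
    (q := (1 - b ^ 2) / 4) (c := c / 4) (by linarith) (by linarith)
    (by rw [map_div₀, hc, normSq_ofNat]; ring)
  obtain ⟨z₁, w₁, hz₁, hw₁, rfl⟩ := exists_mul_eq_of_normSq_eq_mul (p := (1 + a) / 2)
    (q := (1 - a) / 2) (c := Z) (by nlinarith) (by nlinarith) (by rw [hZ]; ring)
  obtain ⟨z₂, w₂, hz₂, hw₂, rfl⟩ := exists_mul_eq_of_normSq_eq_mul (p := (1 + b) / 2)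
    (q := (1 - b) / 2) (c := W) (by nlinarith) (by nlinarith) (by rw [hW]; ring)
  let s₁ : S3 := ⟨ofCoords z₁ (conj w₁), norm_eq_one_iff_coords.2 <| by
    rw [zCoord_ofCoords, wCoord_ofCoords, normSq_conj, hz₁, hw₁]; ring⟩
  let s₂ : S3 := ⟨ofCoords z₂ w₂, norm_eq_one_iff_coords.2 <| by
    rw [zCoord_ofCoords, wCoord_ofCoords, hz₂, hw₂]; ring⟩
  refine ⟨(s₁, s₂), ?_⟩
  simp only [orbitInvariants, hopfHeight, s₁, s₂, zCoord_ofCoords, wCoord_ofCoords, normSq_conj,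
    conj_conj, hz₁, hw₁, hz₂, hw₂, Prod.mk.injEq]
  refine ⟨by ring, by ring, ?_⟩
  linear_combination 4 * hZW

noncomputable def sphereCoords (p : ℝ × ℝ × ℂ) : EuclideanSpace ℝ (Fin 4) :=
  !₂[(squareToDisk p.1 p.2.1).1, (squareToDisk p.1 p.2.1).2, p.2.2.re, p.2.2.im]

theorem continuous_sphereCoords : Continuous sphereCoords := by
  unfold sphereCoords squareToDisk
  fun_prop

theorem sphereCoords_mem_sphere {p : ℝ × ℝ × ℂ} (hp : p ∈ invariantSet) :
    sphereCoords p ∈ Metric.sphere 0 1 := by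
  obtain ⟨ha, hb, hc⟩ := hp
  rw [mem_sphere_zero_iff_norm, ← pow_eq_one_iff_of_nonneg (norm_nonneg _) two_ne_zero,
    EuclideanSpace.real_norm_sq_eq, Fin.sum_univ_four]
  have := sq_squareToDisk_add (by linarith : p.1 ^ 2 ≤ 2) (by linarith : p.2.1 ^ 2 ≤ 2)
  rw [Complex.normSq_apply] at hc
  simp only [sphereCoords, Matrix.cons_val_zero, Matrix.cons_val_one, Matrix.cons_val]
  linear_combination this + hc

theorem sphereCoords_injOn : Set.InjOn sphereCoords invariantSet := by
  rintro ⟨a, b, c⟩ ⟨ha, hb, -⟩ ⟨a', b', c'⟩ ⟨ha', hb', -⟩ h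
  have h' := congrArg WithLp.ofLp h
  simp only [sphereCoords, Matrix.vecCons_inj, and_true] at h'
  obtain ⟨h₁, h₂, h₃, h₄⟩ := h'
  obtain ⟨rfl, rfl⟩ := squareToDisk_inj ha hb ha' hb' (Prod.ext h₁ h₂)
  rw [Complex.ext h₃ h₄]

theorem sphere_subset_image_sphereCoords :
    Metric.sphere 0 1 ⊆ sphereCoords '' invariantSet := by
  intro ω hω
  have hω' := EuclideanSpace.real_norm_sq_eq ω
  rw [Fin.sum_univ_four, mem_sphere_zero_iff_norm.1 hω, one_pow] at hω'
  obtain ⟨a, b, ha, hb, hab⟩ := exists_squareToDisk_eq (x := ω 0) (y := ω 1) (by nlinarith)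
  have := sq_squareToDisk_add (by linarith : a ^ 2 ≤ 2) (by linarith : b ^ 2 ≤ 2)
  rw [hab] at this
  refine ⟨(a, b, ⟨ω 2, ω 3⟩), ⟨ha, hb, ?_⟩, ?_⟩
  · rw [Complex.normSq_mk]; linear_combination -hω' - this
  · ext i
    fin_cases i <;> simp [sphereCoords, hab]

/-- `(S³ × S³)/T³ ≅ S³` for the action `(t₁,t₂,t₃)·(s₁,s₂) = (t₁s₁t₂⁻¹, t₂s₂t₃)`. -/
theorem S3xS3_quotient_T3_homeomorphic_S3' :
    Nonempty (Quot rel16 ≃ₜ Metric.sphere (0 : EuclideanSpace ℝ (Fin 4)) 1) := by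
  have hmem (x : S3 × S3) := sphereCoords_mem_sphere (orbitInvariants_mem x)
  refine Quot.nonempty_homeomorph_of_fibers (f := fun x => ⟨_, hmem x⟩)
    ((continuous_sphereCoords.comp continuous_orbitInvariants).subtype_mk hmem) ?_ fun x y => ?_
  · rintro ⟨ω, hω⟩
    obtain ⟨p, hp, rfl⟩ := sphere_subset_image_sphereCoords hω
    obtain ⟨x, rfl⟩ := exists_orbitInvariants_eq hp
    exact ⟨x, rfl⟩
  · rw [rel16_iff_orbitInvariants_eq, Subtype.mk.injEq,
      sphereCoords_injOn.eq_iff (orbitInvariants_mem x) (orbitInvariants_mem y)]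
end
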